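/- arXiv:math/0610375 — 8 statements merged into one kernel-verified Lean document; each statement's English description precedes it below -/
import Mathlib

section
/- Let E be a complex vector space of finite dimension n, let d be an integer with 1 ≤ d < n, let φ : E → E be a ℂ-linear endomorphism admitting a cyclic vector, and let 𝔥 ⊆ End(E) be the ℂ-linear span of the powers φ^0, φ^1, …, φ^{d−1}. Then the only symmetric ℂ-bilinear map b : E × E → E such that for every e ∈ E the endomorphism x ↦ b(e, x) belongs to 𝔥 is b = 0. -/
open Polynomial Finset

set_option maxHeartbeats 1000000 in
/-- Lemma 6.13 of Fels–Kaup, bilinear form. Let `E` be a complex vector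
space of finite dimension `n`, let `1 ≤ d < n`, let `φ` be a `ℂ`-linear endomorphism of `E`
admitting a cyclic vector, and let `𝔥` be the `ℂ`-linear span of `φ^0, …, φ^(d-1)`.  Then the
only symmetric `ℂ`-bilinear map `b : E × E → E` such that `x ↦ b e x` lies in `𝔥` for every
`e ∈ E` is `b = 0`. -/
theorem symm_bilinear_into_powers_span_eq_zero
    (E : Type*) [AddCommGroup E] [Module ℂ E] [FiniteDimensional ℂ E]
    (n d : ℕ) (hn : Module.finrank ℂ E = n) (hd1 : 1 ≤ d) (hdn : d < n)
    (φ : E →ₗ[ℂ] E) (a : E)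
    (ha : Submodule.span ℂ (Set.range fun k : ℕ => (φ ^ k) a) = ⊤)
    (𝔥 : Submodule ℂ (E →ₗ[ℂ] E))
    (h𝔥 : 𝔥 = Submodule.span ℂ {ψ : E →ₗ[ℂ] E | ∃ k < d, ψ = φ ^ k})
    (b : E →ₗ[ℂ] E →ₗ[ℂ] E) (hsymm : ∀ x y : E, b x y = b y x)
    (hb : ∀ e : E, b e ∈ 𝔥) :
    b = 0 := by
  have hn2 : 2 ≤ n := by omega
  -- every power of φ applied to a lives in the span of the first n powers
  have hchar : (LinearMap.charpoly φ).natDegree = n := by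
    rw [LinearMap.charpoly_natDegree, hn]
  have hmem : ∀ k : ℕ, (φ ^ k) a ∈
      Submodule.span ℂ (Set.range fun i : Fin n => (φ ^ (i : ℕ)) a) := by
    intro k
    have hne1 : LinearMap.charpoly φ ≠ 1 := by
      intro h; rw [h] at hchar; simp at hchar; omega
    have hdeg : ((X ^ k : ℂ[X]) %ₘ LinearMap.charpoly φ).natDegree < n := by
      have := Polynomial.natDegree_modByMonic_lt (X ^ k : ℂ[X])
        (LinearMap.charpoly_monic φ) hne1
      omega
    have h1 : (φ ^ k) a = (aeval φ ((X ^ k : ℂ[X]) %ₘ LinearMap.charpoly φ)) a := by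
      rw [aeval_modByMonic_eq_self_of_root
        (LinearMap.aeval_self_charpoly φ)]
      simp
    rw [h1, Polynomial.aeval_eq_sum_range' hdeg]
    rw [LinearMap.sum_apply]
    refine Submodule.sum_mem _ ?_
    intro i hi
    rw [LinearMap.smul_apply]
    refine Submodule.smul_mem _ _ (Submodule.subset_span ?_)
    exact ⟨⟨i, Finset.mem_range.mp hi⟩, rfl⟩
  have htop : ⊤ ≤ Submodule.span ℂ (Set.range fun i : Fin n => (φ ^ (i : ℕ)) a) := by
    rw [← ha]
    refine Submodule.span_le.2 ?_
    rintro _ ⟨k, rfl⟩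
    exact hmem k
  have hcard : Fintype.card (Fin n) = Module.finrank ℂ E := by simp [hn]
  obtain ⟨B, hB⟩ : ∃ B : Module.Basis (Fin n) ℂ E, ∀ i : Fin n, B i = (φ ^ (i : ℕ)) a :=
    ⟨basisOfTopLeSpanOfCardEqFinrank _ htop hcard, fun i =>
      congrFun (coe_basisOfTopLeSpanOfCardEqFinrank _ htop hcard) i⟩
  -- the top basis index
  obtain ⟨i0, hi0⟩ : ∃ i0 : Fin n, (i0 : ℕ) = n - 1 := ⟨⟨n - 1, by omega⟩, rfl⟩
  have hrepr : ∀ (j : ℕ) (hj : j < n),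
      B.coord i0 ((φ ^ j) a) = if j = n - 1 then 1 else 0 := by
    intro j hj
    have e : B ⟨j, hj⟩ = (φ ^ j) a := hB ⟨j, hj⟩
    rw [← e, Module.Basis.coord_apply, B.repr_self_apply]
    have : (⟨j, hj⟩ : Fin n) = i0 ↔ j = n - 1 := by
      rw [Fin.ext_iff, hi0]
    simp only [this]
  -- decomposition of elements of 𝔥
  have hdecomp : ∀ ψ ∈ 𝔥, ∃ c : Fin d → ℂ, ∑ k : Fin d, c k • φ ^ (k : ℕ) = ψ := by
    intro ψ hψ
    rw [h𝔥] at hψ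
    have hset : {ψ : E →ₗ[ℂ] E | ∃ k < d, ψ = φ ^ k} =
        Set.range fun k : Fin d => φ ^ (k : ℕ) := by
      ext χ
      constructor
      · rintro ⟨k, hk, rfl⟩; exact ⟨⟨k, hk⟩, rfl⟩
      · rintro ⟨k, rfl⟩; exact ⟨k, k.2, rfl⟩
    rw [hset] at hψ
    exact (Submodule.mem_span_range_iff_exists_fun ℂ).mp hψ
  -- applying an element of 𝔥 to a lands in the span of the first d iterates
  have happ : ∀ ψ ∈ 𝔥, ψ a ∈ Submodule.span ℂ (Set.range fun k : Fin d => (φ ^ (k : ℕ)) a) := by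
    intro ψ hψ
    obtain ⟨c, rfl⟩ := hdecomp ψ hψ
    rw [LinearMap.sum_apply]
    refine Submodule.sum_mem _ fun k _ => ?_
    rw [LinearMap.smul_apply]
    exact Submodule.smul_mem _ _ (Submodule.subset_span ⟨k, rfl⟩)
  -- elements of that span have vanishing top coordinate
  have hkey : ∀ w ∈ Submodule.span ℂ (Set.range fun k : Fin d => (φ ^ (k : ℕ)) a),
      B.coord i0 w = 0 := by
    intro w hw
    induction hw using Submodule.span_induction with
    | mem x hx =>
      obtain ⟨k, rfl⟩ := hx
      show B.coord i0 ((φ ^ (k : ℕ)) a) = 0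
      rw [hrepr (k : ℕ) (lt_trans k.2 hdn), if_neg]
      have := k.2
      omega
    | zero => simp
    | add x y _ _ hx hy => rw [map_add, hx, hy, add_zero]
    | smul t x _ hx => rw [map_smul, hx, smul_zero]
  -- Step 1: b a = 0
  obtain ⟨c, hc⟩ := hdecomp (b a) (hb a)
  have hc0 : ∀ m : Fin d, c m = 0 := by
    by_contra h
    push_neg at h
    obtain ⟨m₀, hm₀⟩ := h
    classical
    set S : Finset (Fin d) := Finset.univ.filter (fun k => c k ≠ 0) with hS
    have hSne : S.Nonempty := ⟨m₀, by simp [hS, hm₀]⟩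
    set m : Fin d := S.max' hSne with hm
    have hcm : c m ≠ 0 := by
      have := S.max'_mem hSne
      simp [hS] at this
      exact this
    have hle : ∀ k : Fin d, c k ≠ 0 → k ≤ m := by
      intro k hk
      exact S.le_max' k (by simp [hS, hk])
    set i : ℕ := n - 1 - (m : ℕ) with hi
    have hmn : (m : ℕ) ≤ n - 1 := by have := m.2; omega
    have hzero : B.coord i0 (b ((φ ^ i) a) a) = 0 := hkey _ (happ _ (hb _))
    rw [hsymm] at hzero
    have hcomp : b a ((φ ^ i) a) = ∑ k : Fin d, c k • (φ ^ ((k : ℕ) + i)) a := by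
      rw [← hc, LinearMap.sum_apply]
      refine Finset.sum_congr rfl fun k _ => ?_
      rw [LinearMap.smul_apply, pow_add, Module.End.mul_apply]
    rw [hcomp, map_sum] at hzero
    have heval : ∀ k : Fin d,
        B.coord i0 (c k • (φ ^ ((k : ℕ) + i)) a) = if k = m then c m else 0 := by
      intro k
      rw [map_smul]
      by_cases hck : c k = 0
      · have hkm : k ≠ m := fun h => hcm (h ▸ hck)
        simp [hck, hkm]
      · have hkm : (k : ℕ) ≤ (m : ℕ) := hle k hck
        have hkin : (k : ℕ) + i < n := by omega
        rw [hrepr ((k : ℕ) + i) hkin]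
        by_cases hkm' : k = m
        · have hkv : (k : ℕ) = (m : ℕ) := congrArg Fin.val hkm'
          rw [if_pos (by omega), if_pos hkm', hkm', smul_eq_mul, mul_one]
        · have hklt : (k : ℕ) < (m : ℕ) := by
            rcases lt_or_eq_of_le hkm with h' | h'
            · exact h'
            · exact absurd (Fin.ext h') hkm'
          rw [if_neg (by omega), if_neg hkm', smul_zero]
    rw [Finset.sum_congr rfl (fun k _ => heval k)] at hzero
    rw [Finset.sum_ite_eq' Finset.univ m (fun _ => c m)] at hzero
    simp at hzero
    exact hcm hzero
  have hba : b a = 0 := by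
    rw [← hc]
    refine Finset.sum_eq_zero fun k _ => ?_
    rw [hc0 k, zero_smul]
  -- Step 2: b x = 0 for all x
  have hli : LinearIndependent ℂ (fun k : Fin d => (φ ^ (k : ℕ)) a) := by
    have hinj : Function.Injective (Fin.castLE hdn.le) := Fin.castLE_injective hdn.le
    have h2 := B.linearIndependent.comp (Fin.castLE hdn.le) hinj
    convert h2 using 1
    funext k
    exact (hB (Fin.castLE hdn.le k)).symm
  ext x y
  obtain ⟨c', hc'⟩ := hdecomp (b x) (hb x)
  have hxa : (b x) a = 0 := by rw [hsymm, hba]; rfl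
  have hsum : ∑ k : Fin d, c' k • (φ ^ (k : ℕ)) a = 0 := by
    rw [← hxa, ← hc', LinearMap.sum_apply]
    refine Finset.sum_congr rfl fun k _ => ?_
    rw [LinearMap.smul_apply]
  have hc'0 : ∀ k : Fin d, c' k = 0 :=
    Fintype.linearIndependent_iff.mp hli c' hsum
  have hbx : b x = 0 := by
    rw [← hc']
    refine Finset.sum_eq_zero fun k _ => ?_
    rw [hc'0 k, zero_smul]
  simp [hbx]
end

section
/- Let λ₁, …, λ_s be complex numbers and n₁, …, n_s positive integers with n = n₁ + ⋯ + n_s. Index columns by the set L = {(k, j) : 1 ≤ k ≤ s, 0 ≤ j < n_k}, ordered lexicographically, and rows by ℓ ∈ {0, 1, …, n−1}. Then the n × n complex matrix whose (ℓ, (k, j)) entry equals binom(ℓ, j)·λ_k^{ℓ−j} when j ≤ ℓ and equals 0 when j > ℓ has determinant ∏_{1 ≤ p < q ≤ s} (λ_q − λ_p)^{n_p · n_q}. -/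
namespace GVD

/-- entry function -/
def ent (ℓ : ℕ) (d : ℂ × ℕ) : ℂ :=
  if d.2 ≤ ℓ then (Nat.choose ℓ d.2 : ℂ) * d.1 ^ (ℓ - d.2) else 0

/-- flatten a block description -/
def flat : List (ℂ × ℕ) → List (ℂ × ℕ)
  | [] => []
  | a :: t => ((List.range a.2).map fun j => (a.1, j)) ++ flat t

/-- the product formula -/
def Pl : List (ℂ × ℕ) → ℂ
  | [] => 1
  | a :: t => (t.map fun b => (b.1 - a.1) ^ (a.2 * b.2)).prod * Pl t

@[simp] lemma flat_nil : flat [] = [] := rfl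
lemma flat_cons (a : ℂ × ℕ) (t : List (ℂ × ℕ)) :
    flat (a :: t) = ((List.range a.2).map fun j => (a.1, j)) ++ flat t := rfl

@[simp] lemma flat_length (a : ℂ × ℕ) (t : List (ℂ × ℕ)) :
    (flat (a :: t)).length = a.2 + (flat t).length := by
  simp [flat_cons]

lemma flat_getD_lt (x : ℂ) (m : ℕ) (t : List (ℂ × ℕ)) {p : ℕ} (hp : p < m) (d : ℂ × ℕ) :
    (flat ((x, m) :: t)).getD p d = (x, p) := by
  rw [flat_cons]
  rw [List.getD_append _ _ _ _ (by simpa using hp)]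
  simp [List.getD_eq_getElem?_getD, hp]

lemma flat_getD_ge (x : ℂ) (m : ℕ) (t : List (ℂ × ℕ)) (q : ℕ) (d : ℂ × ℕ) :
    (flat ((x, m) :: t)).getD (m + q) d = (flat t).getD q d := by
  rw [flat_cons]
  rw [List.getD_append_right _ _ _ _ (by simp)]
  simp

/-- predecessor property of flat lists -/
lemma flat_pred (t : List (ℂ × ℕ)) : ∀ (p : ℕ) (y : ℂ) (j : ℕ),
    p < (flat t).length → (flat t).getD p (0, 0) = (y, j + 1) →
    1 ≤ p ∧ (flat t).getD (p - 1) (0, 0) = (y, j) := by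
  induction t with
  | nil => intro p y j hp; simp [flat] at hp
  | cons a t ih =>
    obtain ⟨x, m⟩ := a
    intro p y j hp hv
    rcases lt_or_ge p m with h | h
    · rw [flat_getD_lt x m t h] at hv
      obtain ⟨rfl, rfl⟩ : x = y ∧ p = j + 1 := by
        constructor <;> [exact congrArg Prod.fst hv; exact congrArg Prod.snd hv]
      refine ⟨by omega, ?_⟩
      rw [flat_getD_lt x m t (by omega)]
      simp
    · obtain ⟨q, rfl⟩ : ∃ q, p = m + q := ⟨p - m, by omega⟩
      rw [flat_getD_ge] at hv
      have hq : q < (flat t).length := by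
        have := flat_length (x, m) t; omega
      obtain ⟨h1, h2⟩ := ih q y j hq hv
      refine ⟨by omega, ?_⟩
      have : m + q - 1 = m + (q - 1) := by omega
      rw [this, flat_getD_ge]
      exact h2

/-- first entry of a flat list has second coordinate 0 -/
lemma flat_getD_zero_snd (t : List (ℂ × ℕ)) : ((flat t).getD 0 (0, 0)).2 = 0 := by
  by_cases h : 0 < (flat t).length
  · by_contra hne
    set d := (flat t).getD 0 (0, 0) with hd
    obtain ⟨j, hj⟩ : ∃ j, d.2 = j + 1 := ⟨d.2 - 1, by omega⟩
    have : (flat t).getD 0 (0, 0) = (d.1, j + 1) := by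
      rw [← hd, ← hj]
    obtain ⟨h1, _⟩ := flat_pred t 0 d.1 j h this
    omega
  · have : flat t = [] := List.eq_nil_of_length_eq_zero (by omega)
    simp [this]

/-- key entry computation after row reduction -/
lemma ent_red (ℓ' : ℕ) (x y : ℂ) (j : ℕ) :
    ent (ℓ' + 1) (y, j) - x * ent ℓ' (y, j)
      = (if j = 0 then 0 else ent ℓ' (y, j - 1)) + (y - x) * ent ℓ' (y, j) := by
  rcases j with _ | j
  · simp only [ent, Nat.zero_le, if_true, if_pos rfl, Nat.choose_zero_right, Nat.cast_one,
      one_mul, Nat.sub_zero]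
    rw [pow_succ]
    ring
  · simp only [Nat.succ_ne_zero, if_false, Nat.add_sub_cancel]
    rcases le_or_gt (j + 1) ℓ' with h | h
    · have h1 : j ≤ ℓ' := by omega
      have h2 : j + 1 ≤ ℓ' + 1 := by omega
      simp only [ent, if_pos h, if_pos h1, if_pos h2]
      have hc : ((ℓ' + 1).choose (j + 1) : ℂ) = (ℓ'.choose j : ℂ) + (ℓ'.choose (j + 1) : ℂ) := by
        rw [Nat.choose_succ_succ]
        push_cast
        ring
      have e1 : ℓ' + 1 - (j + 1) = ℓ' - j := by omega
      have e2 : ℓ' - j = (ℓ' - (j + 1)) + 1 := by omega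
      rw [hc, e1, e2, pow_succ]
      ring
    · rcases Nat.eq_or_lt_of_le (by omega : ℓ' + 1 ≤ j + 1) with h2 | h2
      · have hj : j = ℓ' := by omega
        subst hj
        simp only [ent, le_refl, if_pos, if_neg (by omega : ¬ j + 1 ≤ j), Nat.choose_self,
          Nat.cast_one, one_mul, Nat.sub_self, pow_zero, mul_zero]
        ring
      · simp only [ent, if_neg (by omega : ¬ j + 1 ≤ ℓ' + 1), if_neg (by omega : ¬ j + 1 ≤ ℓ'),
          if_neg (by omega : ¬ j ≤ ℓ')]
        ring

lemma prod_flat (t : List (ℂ × ℕ)) (x : ℂ) :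
    ∏ q ∈ Finset.range (flat t).length, (((flat t).getD q (0,0)).1 - x)
      = (t.map fun b => (b.1 - x) ^ b.2).prod := by
  induction t with
  | nil => simp [flat]
  | cons a t ih =>
    obtain ⟨y, m⟩ := a
    rw [flat_length, Finset.prod_range_add]
    have h1 : ∀ q ∈ Finset.range m, (((flat ((y, m) :: t)).getD q (0,0)).1 - x) = y - x := by
      intro q hq
      rw [flat_getD_lt y m t (Finset.mem_range.mp hq)]
    have h2 : ∀ q ∈ Finset.range (flat t).length,
        (((flat ((y, m) :: t)).getD (m + q) (0,0)).1 - x)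
          = (((flat t).getD q (0,0)).1 - x) := by
      intro q _
      rw [flat_getD_ge]
    rw [Finset.prod_congr rfl h1, Finset.prod_congr rfl h2, Finset.prod_const,
      Finset.card_range, ih]
    simp

@[simp] lemma Pl_zero (x : ℂ) (t : List (ℂ × ℕ)) : Pl ((x, 0) :: t) = Pl t := by
  simp [Pl]

lemma Pl_succ (x : ℂ) (m : ℕ) (t : List (ℂ × ℕ)) :
    Pl ((x, m + 1) :: t) = (t.map fun b => (b.1 - x) ^ b.2).prod * Pl ((x, m) :: t) := by
  simp only [Pl]
  rw [← mul_assoc]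
  congr 1
  rw [← List.prod_map_mul]
  congr 1
  apply List.map_congr_left
  intro b _
  rw [← pow_add]
  congr 1
  ring


/-- determinant is unchanged by subtracting `x` times previous row from each row -/
lemma det_row_red {n' : ℕ} (A B : Matrix (Fin (n'+1)) (Fin (n'+1)) ℂ) (x : ℂ)
    (h0 : ∀ c, B 0 c = A 0 c)
    (h : ∀ (ℓ : Fin n') (c : Fin (n'+1)), B ℓ.succ c = A ℓ.succ c - x * A ℓ.castSucc c) :
    B.det = A.det := by
  set L : Matrix (Fin (n'+1)) (Fin (n'+1)) ℂ :=
    Matrix.of fun ℓ ℓ' =>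
      (if ℓ' = ℓ then (1:ℂ) else 0) - x * (if (ℓ' : ℕ) + 1 = (ℓ : ℕ) then 1 else 0) with hL
  have hBLA : B = L * A := by
    ext ℓ c
    rw [Matrix.mul_apply]
    have hterm : ∀ ℓ' : Fin (n'+1), L ℓ ℓ' * A ℓ' c
        = (if ℓ' = ℓ then A ℓ' c else 0)
          - x * (if (ℓ' : ℕ) + 1 = (ℓ : ℕ) then A ℓ' c else 0) := by
      intro ℓ'
      simp only [hL, Matrix.of_apply]
      split_ifs <;> ring
    rw [Finset.sum_congr rfl fun ℓ' _ => hterm ℓ', Finset.sum_sub_distrib, ← Finset.mul_sum,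
      Finset.sum_ite_eq' Finset.univ ℓ (fun ℓ' => A ℓ' c)]
    simp only [Finset.mem_univ, if_true]
    induction ℓ using Fin.cases with
    | zero =>
      have : ∀ ℓ' : Fin (n'+1), (if (ℓ' : ℕ) + 1 = ((0 : Fin (n'+1)) : ℕ) then A ℓ' c else 0) = 0 := by
        intro ℓ'; simp
      rw [Finset.sum_congr rfl fun ℓ' _ => this ℓ']
      simp [h0 c]
    | succ ℓ₀ =>
      have : ∑ ℓ' : Fin (n'+1), (if (ℓ' : ℕ) + 1 = ((ℓ₀.succ : Fin (n'+1)) : ℕ) then A ℓ' c else 0)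
          = A ℓ₀.castSucc c := by
        rw [Finset.sum_eq_single ℓ₀.castSucc]
        · simp
        · intro b _ hb
          rw [if_neg]
          intro hcon
          apply hb
          apply Fin.ext
          simp at hcon ⊢
          omega
        · simp
      rw [this, h ℓ₀ c]
  have hLtri : L.BlockTriangular OrderDual.toDual := by
    intro i j hij
    have hij' : (i : ℕ) < (j : ℕ) := hij
    simp only [hL, Matrix.of_apply]
    rw [if_neg (by intro hc; subst hc; omega), if_neg (by omega)]
    ring
  have hdetL : L.det = 1 := by
    rw [Matrix.det_of_lowerTriangular L hLtri]
    apply Finset.prod_eq_one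
    intro i _
    simp only [hL, Matrix.of_apply, if_pos rfl, if_neg (by omega : ¬ (i : ℕ) + 1 = (i : ℕ))]
    simp
  rw [hBLA, Matrix.det_mul, hdetL, one_mul]

/-- auxiliary vanishing lemma for chained column operations -/
lemma detZ {N₀ : ℕ} : ∀ (t : ℕ) (C : Matrix (Fin N₀) (Fin N₀) ℂ) (g : ℕ → Fin N₀)
    (v : ℕ → Fin N₀ → ℂ) (μ : ℕ → ℂ) (br : ℕ → Bool),
    1 ≤ t →
    (∀ s₁ s₂, s₁ ≤ t → s₂ ≤ t → g s₁ = g s₂ → s₁ = s₂) →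
    br 0 = true →
    (∀ s, s < t → ∀ ℓ, C ℓ (g s) = (if br s then 0 else v (s-1) ℓ) + μ s * v s ℓ) →
    (∀ ℓ, C ℓ (g t) = v (t-1) ℓ) →
    C.det = 0 := by
  intro t
  induction t using Nat.strong_induction_on with
  | _ t ih =>
    intro C g v μ br ht hg hbr hC hlast
    set s := t - 1 with hs
    have hst : s < t := by omega
    have hne : g s ≠ g t := fun hgg => by have := hg s t (by omega) le_rfl hgg; omega
    have hCs : C.det = (C.updateCol (g s)
        (fun ℓ => (if br s then 0 else v (s-1) ℓ) + μ s * v s ℓ)).det := by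
      congr 1
      ext ℓ c
      rw [Matrix.updateCol_apply]
      by_cases hc : c = g s
      · rw [if_pos hc]; subst hc; exact hC s hst ℓ
      · rw [if_neg hc]
    have hsplit : (fun ℓ => (if br s then 0 else v (s-1) ℓ) + μ s * v s ℓ)
        = (fun ℓ => if br s then 0 else v (s-1) ℓ) + (μ s • v s) := by
      funext ℓ
      simp [Pi.add_apply, Pi.smul_apply, smul_eq_mul]
    rw [hCs, hsplit, Matrix.det_updateCol_add, Matrix.det_updateCol_smul]
    have h2 : (C.updateCol (g s) (v s)).det = 0 := by
      apply Matrix.det_zero_of_column_eq hne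
      intro ℓ
      rw [Matrix.updateCol_apply, Matrix.updateCol_apply, if_pos rfl,
        if_neg (Ne.symm hne)]
      exact (hlast ℓ).symm
    rw [h2, mul_zero, add_zero]
    cases hbrs : br s with
    | true =>
      apply Matrix.det_eq_zero_of_column_eq_zero (g s)
      intro ℓ
      rw [Matrix.updateCol_apply, if_pos rfl]
      simp
    | false =>
      have hs1 : 1 ≤ s := by
        by_contra hcon
        have : s = 0 := by omega
        rw [this, hbr] at hbrs
        exact absurd hbrs (by simp)
      apply ih s hst _ g v μ br hs1
      · intro s₁ s₂ h1 h2 hgg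
        exact hg s₁ s₂ (by omega) (by omega) hgg
      · exact hbr
      · intro s' hs' ℓ
        rw [Matrix.updateCol_apply, if_neg]
        · exact hC s' (by omega) ℓ
        · intro hcon
          have := hg s' s (by omega) (by omega) hcon
          omega
      · intro ℓ
        rw [Matrix.updateCol_apply, if_pos rfl, if_neg (by simp [hbrs])]

/-- main column-operation lemma -/
lemma detB {N₀ : ℕ} : ∀ (m : ℕ) (C D : Matrix (Fin N₀) (Fin N₀) ℂ) (g : ℕ → Fin N₀)
    (v : ℕ → Fin N₀ → ℂ) (μ : ℕ → ℂ) (br : ℕ → Bool),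
    (∀ s₁ s₂, s₁ < m → s₂ < m → g s₁ = g s₂ → s₁ = s₂) →
    br 0 = true →
    (∀ t, t < m → ∀ ℓ, C ℓ (g t) = (if br t then 0 else v (t-1) ℓ) + μ t * v t ℓ) →
    (∀ t, t < m → ∀ ℓ, D ℓ (g t) = v t ℓ) →
    (∀ c : Fin N₀, (∀ t, t < m → g t ≠ c) → ∀ ℓ, C ℓ c = D ℓ c) →
    C.det = (∏ t ∈ Finset.range m, μ t) * D.det := by
  intro m
  induction m with
  | zero =>
    intro C D g v μ br _ _ _ _ hout
    have : C = D := by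
      ext ℓ c
      exact hout c (fun t ht => absurd ht (by omega)) ℓ
    simp [this]
  | succ m ih =>
    intro C D g v μ br hg hbr hC hD hout
    have hCs : C.det = (C.updateCol (g m)
        (fun ℓ => (if br m then 0 else v (m-1) ℓ) + μ m * v m ℓ)).det := by
      congr 1
      ext ℓ c
      rw [Matrix.updateCol_apply]
      by_cases hc : c = g m
      · rw [if_pos hc]; subst hc; exact hC m (by omega) ℓ
      · rw [if_neg hc]
    have hsplit : (fun ℓ => (if br m then 0 else v (m-1) ℓ) + μ m * v m ℓ)
        = (fun ℓ => if br m then 0 else v (m-1) ℓ) + (μ m • v m) := by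
      funext ℓ
      simp [Pi.add_apply, Pi.smul_apply, smul_eq_mul]
    rw [hCs, hsplit, Matrix.det_updateCol_add, Matrix.det_updateCol_smul]
    -- first summand is zero
    have h1 : (C.updateCol (g m) (fun ℓ => if br m then 0 else v (m-1) ℓ)).det = 0 := by
      cases hbrm : br m with
      | true =>
        apply Matrix.det_eq_zero_of_column_eq_zero (g m)
        intro ℓ
        rw [Matrix.updateCol_apply, if_pos rfl]
        simp [hbrm]
      | false =>
        have hm1 : 1 ≤ m := by
          by_contra hcon
          have : m = 0 := by omega
          rw [this, hbr] at hbrm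
          exact absurd hbrm (by simp)
        apply detZ m _ g v μ br hm1
        · intro s₁ s₂ h1 h2 hgg
          exact hg s₁ s₂ (by omega) (by omega) hgg
        · exact hbr
        · intro s' hs' ℓ
          rw [Matrix.updateCol_apply, if_neg]
          · exact hC s' (by omega) ℓ
          · intro hcon
            have := hg s' m (by omega) (by omega) hcon
            omega
        · intro ℓ
          rw [Matrix.updateCol_apply, if_pos rfl, if_neg (by simp [hbrm])]
    rw [h1, zero_add]
    -- second summand via induction hypothesis
    have h2 : (C.updateCol (g m) (v m)).det = (∏ t ∈ Finset.range m, μ t) * D.det := by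
      apply ih _ D g v μ br
      · intro s₁ s₂ hs₁ hs₂ hgg
        exact hg s₁ s₂ (by omega) (by omega) hgg
      · exact hbr
      · intro t ht ℓ
        rw [Matrix.updateCol_apply, if_neg]
        · exact hC t (by omega) ℓ
        · intro hcon
          have := hg t m (by omega) (by omega) hcon
          omega
      · intro t ht ℓ
        exact hD t (by omega) ℓ
      · intro c hc ℓ
        by_cases hcm : c = g m
        · subst hcm
          rw [Matrix.updateCol_apply, if_pos rfl]
          exact (hD m (by omega) ℓ).symm
        · rw [Matrix.updateCol_apply, if_neg hcm]
          apply hout c _ ℓ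
          intro t ht
          rcases Nat.lt_or_ge t m with h | h
          · exact hc t h
          · have : t = m := by omega
            subst this
            exact fun hcon => hcm hcon.symm
    rw [h2, Finset.prod_range_succ]
    ring

lemma ent_zero (x : ℂ) : GVD.ent 0 (x, 0) = 1 := by simp [GVD.ent]

namespace GVD2
open GVD

/-- main induction -/
lemma main : ∀ (N : ℕ) (bs : List (ℂ × ℕ)) (n : ℕ),
    (flat bs).length + bs.length ≤ N →
    n = (flat bs).length →
    ∀ V : Matrix (Fin n) (Fin n) ℂ,
    (∀ (ℓ c : Fin n), V ℓ c = ent (ℓ : ℕ) ((flat bs).getD (c : ℕ) (0, 0))) →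
    V.det = Pl bs := by
  intro N
  induction N with
  | zero =>
    intro bs n hN hn V hV
    have hbs : bs = [] := List.eq_nil_of_length_eq_zero (by omega)
    subst hbs
    have hn0 : n = 0 := by simpa using hn
    subst hn0
    simp [Pl, Matrix.det_fin_zero]
  | succ N ih =>
    intro bs n hN hn V hV
    rcases bs with _ | ⟨⟨x, m⟩, t⟩
    · have hn0 : n = 0 := by simpa using hn
      subst hn0
      simp [Pl, Matrix.det_fin_zero]
    rcases m with _ | m
    · have hfl : flat ((x, 0) :: t) = flat t := by simp [flat_cons]
      rw [Pl_zero]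
      refine ih t n ?_ ?_ V ?_
      · rw [hfl] at hN; simp at hN ⊢; omega
      · rw [hfl] at hn; exact hn
      · intro ℓ c
        rw [hV ℓ c, hfl]
    -- main case
    set lenT := (flat t).length with hlenT
    have hnval : n = (m + lenT) + 1 := by
      rw [hn, flat_length]; omega
    obtain ⟨n', rfl⟩ : ∃ n', n = n' + 1 := ⟨m + lenT, hnval⟩
    have hn' : n' = m + lenT := by omega
    set bs0 := (x, m + 1) :: t with hbs0
    set d : Fin (n' + 1) → ℂ × ℕ := fun c => (flat bs0).getD (c : ℕ) (0, 0) with hd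
    set B : Matrix (Fin (n' + 1)) (Fin (n' + 1)) ℂ := Matrix.of fun ℓ c =>
      if (ℓ : ℕ) = 0 then ent 0 (d c)
      else ent (ℓ : ℕ) (d c) - x * ent ((ℓ : ℕ) - 1) (d c) with hB
    have hdBV : B.det = V.det := by
      apply det_row_red V B x
      · intro c
        rw [hV 0 c]
        simp [hB, hd]
      · intro ℓ c
        rw [hV ℓ.succ c, hV ℓ.castSucc c]
        simp [hB, hd]
    have hd0 : d 0 = (x, 0) := by
      simp only [hd, Fin.val_zero]
      exact flat_getD_lt x (m + 1) t (by omega) _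
    have hcol0 : ∀ i : Fin (n' + 1), i ≠ 0 → B i 0 = 0 := by
      intro i hi
      have hiv : (i : ℕ) ≠ 0 := by
        intro hcon; exact hi (Fin.ext hcon)
      obtain ⟨ℓ', hℓ'⟩ : ∃ ℓ', (i : ℕ) = ℓ' + 1 := ⟨(i : ℕ) - 1, by omega⟩
      simp only [hB, Matrix.of_apply, if_neg hiv, hd0, hℓ', Nat.add_sub_cancel]
      rw [ent_red]
      simp
    have hB00 : B 0 0 = 1 := by
      simp only [hB, Matrix.of_apply, Fin.val_zero, if_pos rfl, hd0]
      exact ent_zero x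
    have hexp : B.det = (B.submatrix Fin.succ Fin.succ).det := by
      rw [Matrix.det_succ_column_zero, Finset.sum_eq_single 0]
      · rw [hB00]
        simp [Fin.succAbove_zero]
      · intro i _ hi
        rw [hcol0 i hi]
        ring
      · simp
    set N2 : Matrix (Fin n') (Fin n') ℂ := B.submatrix Fin.succ Fin.succ with hN2
    set V' : Matrix (Fin n') (Fin n') ℂ := Matrix.of fun ℓ c =>
      ent (ℓ : ℕ) ((flat ((x, m) :: t)).getD (c : ℕ) (0, 0)) with hV'
    set μf : ℕ → ℂ := fun p =>
      if p < m then 1 else ((flat t).getD (p - m) (0, 0)).1 - x with hμ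
    set cs1 : ℕ → ℂ × ℕ := fun p => (flat bs0).getD (p + 1) (0, 0) with hcs1
    set cs2 : ℕ → ℂ × ℕ := fun p => (flat ((x, m) :: t)).getD p (0, 0) with hcs2
    have hcs1lt : ∀ p, p < m → cs1 p = (x, p + 1) := by
      intro p hp
      exact flat_getD_lt x (m + 1) t (by omega) _
    have hcs2lt : ∀ p, p < m → cs2 p = (x, p) := by
      intro p hp
      exact flat_getD_lt x m t hp _
    have hcs1ge : ∀ p, m ≤ p → cs1 p = (flat t).getD (p - m) (0, 0) := by
      intro p hp
      have heq : p + 1 = (m + 1) + (p - m) := by omega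
      rw [hcs1]
      simp only [hbs0]
      conv_lhs => rw [heq]
      exact flat_getD_ge x (m + 1) t (p - m) (0, 0)
    have hcs2ge : ∀ p, m ≤ p → cs2 p = (flat t).getD (p - m) (0, 0) := by
      intro p hp
      have heq : p = m + (p - m) := by omega
      rw [hcs2]
      simp only
      conv_lhs => rw [heq]
      exact flat_getD_ge x m t (p - m) (0, 0)
    set brf : ℕ → Bool := fun p => decide (p < m) || decide ((cs1 p).2 = 0) with hbrf
    set vf : ℕ → Fin n' → ℂ := fun p ℓ => ent (ℓ : ℕ) (cs2 p) with hvf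
    have hstep : N2.det = (∏ p ∈ Finset.range n', μf p) * V'.det := by
      rcases Nat.eq_zero_or_pos n' with h0' | hpos'
      · have hN20 : N2.det = 1 := Matrix.det_eq_one_of_card_eq_zero (by simp [h0'])
        have hV'0 : V'.det = 1 := Matrix.det_eq_one_of_card_eq_zero (by simp [h0'])
        rw [hN20, hV'0, h0']
        simp
      · set g : ℕ → Fin n' := fun p => ⟨p % n', Nat.mod_lt _ hpos'⟩ with hg
        have hgval : ∀ p, p < n' → (g p : ℕ) = p := fun p hp => Nat.mod_eq_of_lt hp
        have hNentry : ∀ (ℓ : Fin n') (p : ℕ), p < n' →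
            N2 ℓ (g p) = ent ((ℓ : ℕ) + 1) (cs1 p) - x * ent (ℓ : ℕ) (cs1 p) := by
          intro ℓ p hp
          have hsv : ((g p).succ : ℕ) = p + 1 := by
            rw [Fin.val_succ, hgval p hp]
          simp only [hN2, Matrix.submatrix_apply, hB, Matrix.of_apply, Fin.val_succ,
            if_neg (by omega : ¬ (ℓ : ℕ) + 1 = 0), Nat.add_sub_cancel]
          have hdv : d (g p).succ = cs1 p := by
            simp only [hd, hcs1, hsv]
          rw [hdv]
        apply detB n' N2 V' g vf μf brf
        · intro p₁ p₂ h1 h2 hgg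
          have := congrArg Fin.val hgg
          rw [hgval p₁ h1, hgval p₂ h2] at this
          exact this
        · rcases Nat.eq_zero_or_pos m with hm | hm
          · subst hm
            have h00 : (cs1 0).2 = 0 := by
              rw [hcs1ge 0 (le_refl 0)]
              simpa using flat_getD_zero_snd t
            simp [hbrf, h00]
          · simp [hbrf, hm]
        · -- hC
          intro p hp ℓ
          rw [hNentry ℓ p hp]
          rcases Nat.lt_or_ge p m with hpm | hpm
          · rw [hcs1lt p hpm, ent_red]
            have hbr : brf p = true := by simp [hbrf, hpm]
            rw [hbr]
            simp only [if_pos rfl, Nat.add_sub_cancel, if_neg (Nat.succ_ne_zero p)]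
            rw [hμ]
            simp only [if_pos hpm, hvf, hcs2lt p hpm]
            simp
          · rw [hcs1ge p hpm]
            rcases hyj : (flat t).getD (p - m) (0, 0) with ⟨y, j⟩
            rw [ent_red]
            have hμv : μf p = y - x := by
              rw [hμ]
              simp only [if_neg (by omega : ¬ p < m), hyj]
            have hvfp : vf p = fun ℓ : Fin n' => ent (ℓ : ℕ) (y, j) := by
              funext ℓ
              rw [hvf]
              simp only [hcs2ge p hpm, hyj]
            have hbrv : brf p = decide (j = 0) := by
              have hnot : ¬ p < m := Nat.not_lt.mpr hpm
              rw [hbrf]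
              simp only [hcs1ge p hpm, hyj]
              simp [hnot]
            rw [hμv, hvfp, hbrv]
            rcases j with _ | j'
            · simp
            · obtain ⟨hq1, hq2⟩ := flat_pred t (p - m) y j' (by omega) hyj
              have hvfp1 : vf (p - 1) ℓ = ent (ℓ : ℕ) (y, j') := by
                rw [hvf]
                simp only [hcs2ge (p - 1) (by omega)]
                have h' : p - 1 - m = p - m - 1 := by omega
                rw [h', hq2]
              simp [hvfp1]
        · -- hD
          intro p hp ℓ
          simp only [hV', Matrix.of_apply, hvf, hcs2]
          rw [hgval p hp]
        · -- hout
          intro c hc ℓ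
          exact absurd (Fin.ext (hgval (c : ℕ) c.isLt) : g (c : ℕ) = c)
            (hc (c : ℕ) c.isLt)
    have hprod : (∏ p ∈ Finset.range n', μf p) = (t.map fun b => (b.1 - x) ^ b.2).prod := by
      rw [hn', Finset.prod_range_add]
      have h1 : ∀ p ∈ Finset.range m, μf p = 1 := by
        intro p hp
        rw [hμ]
        simp [Finset.mem_range.mp hp]
      have h2 : ∀ q ∈ Finset.range lenT, μf (m + q) = ((flat t).getD q (0, 0)).1 - x := by
        intro q _
        rw [hμ]
        simp [(by omega : ¬ m + q < m), Nat.add_sub_cancel_left]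
      rw [Finset.prod_congr rfl h1, Finset.prod_congr rfl h2, Finset.prod_const_one, one_mul,
        hlenT]
      exact prod_flat t x
    have hV'det : V'.det = Pl ((x, m) :: t) := by
      refine ih ((x, m) :: t) n' ?_ ?_ V' ?_
      · rw [flat_length]
        have h1 : (flat bs0).length = (m + 1) + lenT := by rw [hbs0, flat_length]
        have h2 : bs0.length = t.length + 1 := by rw [hbs0]; simp
        rw [h1, h2] at hN
        simp
        omega
      · rw [flat_length]; omega
      · intro ℓ c
        simp [hV']
    rw [← hdBV, hexp, hstep, hprod, hV'det, Pl_succ]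

namespace GVD3
open GVD

lemma flat_length_sum : ∀ bs : List (ℂ × ℕ), (flat bs).length = (bs.map Prod.snd).sum := by
  intro bs
  induction bs with
  | nil => simp [flat]
  | cons a t ih => simp [flat_cons, ih]

lemma flat_getD_prefix : ∀ (bs : List (ℂ × ℕ)) (i j : ℕ) (hi : i < bs.length),
    j < bs[i].2 →
    (flat bs).getD ((((bs.take i).map Prod.snd).sum) + j) (0, 0) = (bs[i].1, j) := by
  intro bs
  induction bs with
  | nil => intro i j hi; simp at hi
  | cons a t ih =>
    intro i j hi hj
    obtain ⟨y, mm⟩ := a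
    cases i with
    | zero =>
      simp only [List.take_zero, List.map_nil, List.sum_nil, zero_add,
        List.getElem_cons_zero] at hj ⊢
      exact flat_getD_lt y mm t hj _
    | succ i =>
      simp only [List.take_succ_cons, List.map_cons, List.sum_cons,
        List.getElem_cons_succ] at hj ⊢
      rw [add_assoc, flat_getD_ge]
      exact ih i j (by simpa using hi) hj

lemma take_map_sum : ∀ (l : List (ℂ × ℕ)) (i : ℕ), i ≤ l.length →
    ((l.take i).map Prod.snd).sum = ∑ p ∈ Finset.range i, (l.getD p (0, 0)).2 := by
  intro l
  induction l with
  | nil =>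
    intro i hi
    have h0 : i = 0 := by simpa using hi
    subst h0
    simp
  | cons a t ih =>
    intro i hi
    cases i with
    | zero => simp
    | succ i =>
      rw [List.take_succ_cons, List.map_cons, List.sum_cons, ih i (by simpa using hi),
        Finset.sum_range_succ']
      simp [List.getD_cons_succ, List.getD_cons_zero]
      omega

lemma Pl_ofFn : ∀ (s : ℕ) (f : Fin s → ℂ × ℕ), Pl (List.ofFn f)
    = ∏ p : Fin s, ∏ q ∈ Finset.Ioi p, ((f q).1 - (f p).1) ^ ((f p).2 * (f q).2) := by
  intro s
  induction s with
  | zero => intro f; simp [Pl]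
  | succ s ih =>
    intro f
    rw [List.ofFn_succ]
    show (((List.ofFn fun i => f i.succ).map fun b => (b.1 - (f 0).1) ^ ((f 0).2 * b.2)).prod
      * Pl (List.ofFn fun i => f i.succ)) = _
    rw [List.map_ofFn, List.prod_ofFn, ih, Fin.prod_univ_succ]
    congr 1
    · rw [Fin.prod_Ioi_zero]
      rfl
    · apply Finset.prod_congr rfl
      intro p _
      rw [Fin.prod_Ioi_succ]

lemma sum_Iio_getD {s : ℕ} (f : Fin s → ℂ × ℕ) (i : Fin s) :
    ∑ k ∈ Finset.Iio i, (f k).2 = ∑ p ∈ Finset.range (i : ℕ), ((List.ofFn f).getD p (0, 0)).2 := by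
  apply Finset.sum_bij (fun (k : Fin s) (_ : k ∈ Finset.Iio i) => (k : ℕ))
  · intro a ha
    simp only [Finset.mem_Iio] at ha
    simp only [Finset.mem_range]
    exact ha
  · intro a _ b _ hab
    exact Fin.ext hab
  · intro b hb
    have hb' : b < (i : ℕ) := Finset.mem_range.mp hb
    exact ⟨⟨b, lt_trans hb' i.isLt⟩, by simpa [Finset.mem_Iio, Fin.lt_iff_val_lt_val] using hb',
      rfl⟩
  · intro a ha
    have hlt : (a : ℕ) < (List.ofFn f).length := by simp [a.isLt]
    rw [List.getD_eq_getElem _ _ hlt]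
    simp [List.getElem_ofFn]

end GVD3

end GVD2
end GVD

/-- generalized/confluent Vandermonde determinant, Remark 6.12 of
Fels–Kaup.  Let `λ₁, …, λ_s ∈ ℂ` and `n₁, …, n_s ≥ 1` with `n = n₁ + ⋯ + n_s`.  Identify
the lexicographically ordered index set `L = {(k, j) : k < s, j < n_k}` with `{0, …, n-1}`
via the order isomorphism `e` (so that `e (k, j) = n₁ + ⋯ + n_{k-1} + j`).  The `n × n`
matrix with `(ℓ, (k,j))` entry `binom(ℓ, j) · λ_k ^ (ℓ - j)` for `j ≤ ℓ` and `0` for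
`j > ℓ` has determinant `∏_{p < q} (λ_q − λ_p) ^ (n_p n_q)`. -/
theorem generalized_vandermonde_det
    (s : ℕ) (lam : Fin s → ℂ) (nn : Fin s → ℕ) (hpos : ∀ k, 1 ≤ nn k)
    (e : (Σ k : Fin s, Fin (nn k)) ≃ Fin (∑ k, nn k))
    (he : ∀ kj : Σ k : Fin s, Fin (nn k),
      (e kj : ℕ) = (∑ k' ∈ Finset.Iio kj.1, nn k') + (kj.2 : ℕ))
    (M : Matrix (Fin (∑ k, nn k)) (Fin (∑ k, nn k)) ℂ)
    (hM : ∀ (ℓ : Fin (∑ k, nn k)) (kj : Σ k : Fin s, Fin (nn k)),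
      M ℓ (e kj) =
        if (kj.2 : ℕ) ≤ (ℓ : ℕ) then
          (Nat.choose (ℓ : ℕ) (kj.2 : ℕ) : ℂ) * lam kj.1 ^ ((ℓ : ℕ) - (kj.2 : ℕ))
        else 0) :
    M.det = ∏ p : Fin s, ∏ q ∈ Finset.Ioi p, (lam q - lam p) ^ (nn p * nn q) := by
  classical
  open GVD GVD2 GVD3 in
  set f : Fin s → ℂ × ℕ := fun k => (lam k, nn k) with hf
  set bs : List (ℂ × ℕ) := List.ofFn f with hbs
  have hlen : (∑ k, nn k) = (GVD.flat bs).length := by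
    rw [GVD3.flat_length_sum, hbs, List.map_ofFn, List.sum_ofFn]
    rfl
  have hent : ∀ (ℓ c : Fin (∑ k, nn k)),
      M ℓ c = GVD.ent (ℓ : ℕ) ((GVD.flat bs).getD (c : ℕ) (0, 0)) := by
    intro ℓ c
    have hc : e (e.symm c) = c := e.apply_symm_apply c
    set kj := e.symm c with hkj
    rw [← hc, hM ℓ kj]
    have hiv : (kj.1 : ℕ) < bs.length := by
      rw [hbs, List.length_ofFn]; exact kj.1.isLt
    have hgetelem : bs[(kj.1 : ℕ)] = (lam kj.1, nn kj.1) := by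
      show (List.ofFn f)[(kj.1 : ℕ)]'_ = _
      rw [List.getElem_ofFn]
    have hj : (kj.2 : ℕ) < bs[(kj.1 : ℕ)].2 := by
      rw [hgetelem]; exact kj.2.isLt
    have hpre : ((bs.take (kj.1 : ℕ)).map Prod.snd).sum = ∑ k' ∈ Finset.Iio kj.1, nn k' := by
      rw [GVD3.take_map_sum bs _ (by omega)]
      rw [show (fun k : Fin s => nn k) = fun k => (f k).2 from rfl]
      exact (GVD3.sum_Iio_getD f kj.1).symm
    have hgd : (GVD.flat bs).getD ((e kj : ℕ)) (0, 0) = (lam kj.1, (kj.2 : ℕ)) := by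
      rw [he kj, ← hpre]
      have h := GVD3.flat_getD_prefix bs (kj.1 : ℕ) (kj.2 : ℕ) hiv hj
      rw [hgetelem] at h
      exact h
    rw [hgd]
    rfl
  have hmain := GVD2.main ((GVD.flat bs).length + bs.length) bs (∑ k, nn k) le_rfl hlen M hent
  rw [hmain, hbs, GVD3.Pl_ofFn s f]
end

section
/- Let E be a finite-dimensional complex normed vector space, a ∈ E, U ⊆ E an open neighborhood of a, and f : E → E a map that is analytic on U. Define the operator L on maps g : E → E by (L g)(z) = (Dg(z))(z − a) − g(z), where Dg(z) denotes the Fréchet derivative of g at z. If the ℂ-linear span of the iterates f, L f, L² f, …, each restricted to U, is a finite-dimensional subspace of the vector space of all maps U → E, then f agrees on a neighborhood of a with a polynomial map; equivalently, there exists N ∈ ℕ such that the k-th iterated derivative of f at a vanishes for every k > N. -/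
open Set Filter
open scoped Topology ENNReal NNReal

namespace FelsKaupAux

universe u

variable {E : Type u} [NormedAddCommGroup E] [NormedSpace ℂ E]
variable {F : Type u} [NormedAddCommGroup F] [NormedSpace ℂ F]

/-- If the coefficients of a series are rescaled by scalars of at most linear growth,
the radius of convergence does not decrease. -/
lemma le_radius_smul (p : FormalMultilinearSeries ℂ E F) (c : ℕ → ℂ) (C : ℝ)
    (hc : ∀ k, ‖c k‖ ≤ C * (k + 1)) :
    p.radius ≤ FormalMultilinearSeries.radius (fun k => c k • p k) := by
  refine ENNReal.le_of_forall_nnreal_lt fun r hr => ?_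
  obtain ⟨b, hb, Cb, hCb, hbound⟩ := p.norm_mul_pow_le_mul_pow_of_lt_radius hr
  apply FormalMultilinearSeries.le_radius_of_summable
  have hC : 0 ≤ C := by
    have h0 := (norm_nonneg (c 0)).trans (hc 0)
    nlinarith
  have hsum : Summable (fun n : ℕ => (C * (n + 1)) * (Cb * b ^ n)) := by
    have h1 : Summable (fun n : ℕ => (n : ℝ) ^ 1 * b ^ n) :=
      summable_pow_mul_geometric_of_norm_lt_one 1
        (by rw [Real.norm_eq_abs, abs_of_pos hb.1]; exact hb.2)
    have h2 : Summable (fun n : ℕ => b ^ n) := summable_geometric_of_lt_one hb.1.le hb.2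
    have h3 : Summable (fun n : ℕ => (n : ℝ) * b ^ n + b ^ n) := by
      simpa using h1.add h2
    refine (h3.mul_left (C * Cb)).congr fun n => ?_
    ring
  refine hsum.of_nonneg_of_le (fun n => by positivity) (fun n => ?_)
  have hnorm : ‖(fun k => c k • p k) n‖ = ‖c n‖ * ‖p n‖ :=
    norm_smul (β := ContinuousMultilinearMap ℂ (fun _ : Fin n => E) F) _ _
  rw [hnorm, mul_assoc]
  apply mul_le_mul (hc n) (hbound n) (by positivity)
  have hn : (0 : ℝ) ≤ (n : ℝ) + 1 := by positivity
  nlinarith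

/-- Rescaling a power series representation by a constant scalar. -/
lemma hasFPowerSeriesOnBall_smul {g : E → F} {p : FormalMultilinearSeries ℂ E F} {x : E}
    {r : ℝ≥0∞} (c : ℂ) (hg : HasFPowerSeriesOnBall g p x r) :
    HasFPowerSeriesOnBall (fun z => c • g z) (fun k => c • p k) x r := by
  have hrad : p.radius ≤ FormalMultilinearSeries.radius (fun k => c • p k) :=
    le_radius_smul p (fun _ => c) ‖c‖ (fun k => by
      have hk : (0 : ℝ) ≤ (k : ℝ) := Nat.cast_nonneg k
      nlinarith [norm_nonneg c])
  refine ⟨hg.r_le.trans hrad, hg.r_pos, ?_⟩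
  intro y hy
  simpa only [ContinuousMultilinearMap.smul_apply] using (hg.hasSum hy).const_smul c

set_option maxHeartbeats 2000000 in
/-- The key computation: applying the Euler-type operator
`g ↦ (z ↦ Dg(z)(z - a) - g(z))` multiplies the `k`-th coefficient of the power series at `a`
by `k - 1`. -/
lemma euler_step [CompleteSpace E] {g : E → E} {p : FormalMultilinearSeries ℂ E E} {a : E}
    {r : ℝ≥0∞} (hg : HasFPowerSeriesOnBall g p a r) :
    HasFPowerSeriesOnBall (fun z => fderiv ℂ g z (z - a) - g z)
      (fun k => ((k : ℂ) - 1) • p k) a r := by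
  have hrad : p.radius ≤ FormalMultilinearSeries.radius (fun k => ((k : ℂ) - 1) • p k) :=
    le_radius_smul p (fun k => (k : ℂ) - 1) 1 (fun k => by
      calc ‖(k : ℂ) - 1‖ ≤ ‖(k : ℂ)‖ + ‖(1 : ℂ)‖ := norm_sub_le _ _
        _ ≤ 1 * (k + 1) := by simp [Complex.norm_natCast])
  refine ⟨hg.r_le.trans hrad, hg.r_pos, ?_⟩
  · intro y hy
    have h1 : HasSum (fun n => p.derivSeries n (fun _ => y)) (fderiv ℂ g (a + y)) :=
      hg.fderiv.hasSum hy
    have h2 := (ContinuousLinearMap.apply ℂ E y).hasSum h1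
    simp only [ContinuousLinearMap.apply_apply] at h2
    have key : ∀ n : ℕ, p.derivSeries n (fun _ => y) y
        = ((n : ℂ) + 1) • p (n + 1) (fun _ => y) := by
      intro n
      rw [p.derivSeries_apply_diag, ← Nat.cast_smul_eq_nsmul ℂ]
      push_cast
      ring_nf
    simp only [key] at h2
    have hshift : (fun n : ℕ => ((n : ℂ) + 1) • p (n + 1) (fun _ => y))
        = fun n : ℕ => (fun k : ℕ => (k : ℂ) • p k (fun _ => y)) (n + 1) := by
      funext n
      push_cast
      ring_nf
    rw [hshift] at h2
    have h3 : HasSum (fun k : ℕ => (k : ℂ) • p k (fun _ => y)) (fderiv ℂ g (a + y) y) := by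
      have := (hasSum_nat_add_iff (f := fun k : ℕ => (k : ℂ) • p k (fun _ => y)) 1).mp h2
      simpa using this
    have h4 := hg.hasSum hy
    have h5 := h3.sub h4
    have hfn : (fun k : ℕ => (((k : ℂ) - 1) • p k) fun _ => y)
        = fun k : ℕ => (k : ℂ) • p k (fun _ => y) - p k (fun _ => y) := by
      funext k
      simp [sub_smul]
    rw [hfn]
    simpa using h5

/-- If a function has a finite power series (of length `n`) on a ball around `x`, then all its
iterated derivatives at `x` of order at least `n` vanish. -/
lemma vanish {E : Type u} [NormedAddCommGroup E] [NormedSpace ℂ E] {x : E} {r : ℝ≥0∞} :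
    ∀ (n : ℕ) {F : Type u} [NormedAddCommGroup F] [NormedSpace ℂ F]
      {f : E → F} {p : FormalMultilinearSeries ℂ E F},
      HasFiniteFPowerSeriesOnBall f p x n r → ∀ k, n ≤ k → iteratedFDeriv ℂ k f x = 0 := by
  intro n
  induction n with
  | zero =>
    intro F _ _ f p h k _
    have h0 : ∀ y ∈ EMetric.ball x r, f y = 0 := h.eq_zero_of_bound_zero
    have heq : f =ᶠ[𝓝 x] fun _ => (0 : F) :=
      Filter.eventuallyEq_of_mem (EMetric.ball_mem_nhds x h.r_pos) h0
    have hx : f x = 0 := h0 x (EMetric.mem_ball_self h.r_pos)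
    have : iteratedFDeriv ℂ k f x = iteratedFDeriv ℂ k (fun _ => (0 : F)) x := by
      rw [← iteratedFDerivWithin_univ, ← iteratedFDerivWithin_univ]
      exact Filter.EventuallyEq.iteratedFDerivWithin_eq
        (heq.filter_mono nhdsWithin_le_nhds) hx k
    rw [this, iteratedFDeriv_zero_fun]
    rfl
  | succ n ih =>
    intro F _ _ f p h k hk
    obtain ⟨k', rfl⟩ : ∃ k', k = k' + 1 := ⟨k - 1, by omega⟩
    have hd := h.fderiv
    have hz := ih hd k' (by omega)
    ext m
    rw [iteratedFDeriv_succ_apply_right, hz]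
    simp

end FelsKaupAux

/-- key step of Proposition 4.1 of Fels–Kaup.  Let `E` be a
finite-dimensional complex normed space, `f : E → E` analytic on an open neighbourhood `U`
of `a`, and let `L` be the operator `(L g)(z) = Dg(z)(z − a) − g(z)` (the bracket with the
Euler field centred at `a`).  If the iterates `f, L f, L² f, …`, restricted to `U`, span a
finite-dimensional subspace of the maps `U → E`, then all iterated derivatives of `f` at
`a` of sufficiently high order vanish, i.e. `f` agrees near `a` with a polynomial map. -/
theorem analytic_is_polynomial_of_finite_euler_orbit
    (E : Type*) [NormedAddCommGroup E] [NormedSpace ℂ E] [FiniteDimensional ℂ E]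
    (a : E) (U : Set E) (hU : IsOpen U) (haU : a ∈ U)
    (f : E → E) (hf : AnalyticOnNhd ℂ f U)
    (L : (E → E) → (E → E))
    (hL : ∀ (g : E → E) (z : E), L g z = fderiv ℂ g z (z - a) - g z)
    (hfin : FiniteDimensional ℂ
      ↥(Submodule.span ℂ (Set.range fun k : ℕ => U.restrict (L^[k] f)))) :
    ∃ N : ℕ, ∀ k : ℕ, N < k → iteratedFDeriv ℂ k f a = 0 := by
  classical
  -- the power series of `f` at `a`
  obtain ⟨p, hp⟩ := hf a haU
  obtain ⟨r, hpf⟩ := hp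
  -- power series of the iterates of `L`
  have hiter : ∀ i : ℕ,
      HasFPowerSeriesOnBall (L^[i] f) (fun k => ((k : ℂ) - 1) ^ i • p k) a r := by
    intro i
    induction i with
    | zero => simpa using hpf
    | succ i ih =>
      have hfun : L^[i + 1] f = fun z => fderiv ℂ (L^[i] f) z (z - a) - L^[i] f z := by
        rw [Function.iterate_succ_apply']
        funext z
        exact hL _ z
      rw [hfun]
      have hstep := FelsKaupAux.euler_step ih
      have hser : (fun k : ℕ => ((k : ℂ) - 1) ^ (i + 1) • p k)
          = fun k : ℕ => ((k : ℂ) - 1) • (((k : ℂ) - 1) ^ i • p k) := by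
        funext k
        rw [smul_smul, ← pow_succ']
      rw [hser]
      exact hstep
  -- a nontrivial linear relation among the iterates
  set S := Submodule.span ℂ (Set.range fun k : ℕ => U.restrict (L^[k] f)) with hS
  haveI : Module.Finite ℂ S := hfin
  have hw : ¬ LinearIndependent ℂ
      (fun k : ℕ => (⟨U.restrict (L^[k] f), Submodule.subset_span ⟨k, rfl⟩⟩ : S)) :=
    Module.Finite.not_linearIndependent_of_infinite _
  rw [linearIndependent_iff'] at hw
  push_neg at hw
  obtain ⟨s, gc, hrel, i₀, hi₀s, hi₀⟩ := hw
  -- the relation as functions on `U`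
  have hrelU : ∀ z ∈ U, (∑ i ∈ s, gc i • L^[i] f z) = 0 := by
    intro z hz
    have h2 : (∑ i ∈ s, gc i • U.restrict (L^[i] f)) = (0 : U → E) := by
      have := congrArg (S.subtype) hrel
      simpa [map_sum] using this
    have h3 := congrFun h2 ⟨z, hz⟩
    simp only [Finset.sum_apply, Pi.smul_apply] at h3
    exact h3
  -- a power series for the combination
  have hcomb : ∀ t : Finset ℕ,
      HasFPowerSeriesOnBall (fun z => ∑ i ∈ t, gc i • L^[i] f z)
        (fun k => ∑ i ∈ t, gc i • (((k : ℂ) - 1) ^ i • p k)) a r := by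
    intro t
    induction t using Finset.induction_on with
    | empty =>
      simp only [Finset.sum_empty]
      refine ⟨?_, hpf.r_pos, ?_⟩
      · rw [show (fun k : ℕ =>
            (0 : ContinuousMultilinearMap ℂ (fun _ : Fin k => E) E))
            = (0 : FormalMultilinearSeries ℂ E E) from rfl,
          FormalMultilinearSeries.zero_radius]
        exact le_top
      · intro y _
        simpa using (hasSum_zero : HasSum (fun _ : ℕ => (0 : E)) 0)
    | @insert i t hit ih =>
      have h1 := FelsKaupAux.hasFPowerSeriesOnBall_smul (gc i) (hiter i)
      have h2 := h1.add ih
      have hfun : (fun z => ∑ j ∈ insert i t, gc j • L^[j] f z)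
          = (fun z => gc i • L^[i] f z) + fun z => ∑ j ∈ t, gc j • L^[j] f z := by
        funext z
        simp [Finset.sum_insert hit]
      have hser : (fun k : ℕ => ∑ j ∈ insert i t, gc j • (((k : ℂ) - 1) ^ j • p k))
          = (fun k : ℕ => gc i • (((k : ℂ) - 1) ^ i • p k))
            + fun k : ℕ => ∑ j ∈ t, gc j • (((k : ℂ) - 1) ^ j • p k) := by
        funext k
        simp [Finset.sum_insert hit]
      rw [hfun, hser]
      exact h2
  -- the combination vanishes near `a`
  have hzero : (fun z => ∑ i ∈ s, gc i • L^[i] f z) =ᶠ[𝓝 a] 0 := by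
    filter_upwards [hU.mem_nhds haU] with z hz
    exact hrelU z hz
  have h0 : HasFPowerSeriesAt 0 (fun k => ∑ i ∈ s, gc i • (((k : ℂ) - 1) ^ i • p k)) a :=
    ((hcomb s).hasFPowerSeriesAt).congr hzero
  have hcoeff : ∀ (k : ℕ) (y : E),
      (∑ i ∈ s, gc i * ((k : ℂ) - 1) ^ i) • p k (fun _ => y) = 0 := by
    intro k y
    have := h0.apply_eq_zero k y
    simpa [ContinuousMultilinearMap.sum_apply, ContinuousMultilinearMap.smul_apply,
      smul_smul, Finset.sum_smul] using this
  -- the polynomial `Q`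
  set Q : Polynomial ℂ := ∑ i ∈ s, Polynomial.C (gc i) * Polynomial.X ^ i with hQ
  have hQcoeff : Q.coeff i₀ = gc i₀ := by
    rw [hQ, Polynomial.finset_sum_coeff, Finset.sum_eq_single i₀]
    · simp [Polynomial.coeff_C_mul, Polynomial.coeff_X_pow]
    · intro b hb hbne
      simp [Polynomial.coeff_C_mul, Polynomial.coeff_X_pow, Ne.symm hbne]
    · intro hne
      exact absurd hi₀s hne
  have hQne : Q ≠ 0 := fun h => hi₀ (by rw [← hQcoeff, h, Polynomial.coeff_zero])
  have hQeval : ∀ z : ℂ, Q.eval z = ∑ i ∈ s, gc i * z ^ i := by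
    intro z
    rw [hQ]
    simp [Polynomial.eval_finset_sum]
  -- the set of `k` for which the coefficient could survive is finite
  have hfinroots : {k : ℕ | Q.eval ((k : ℂ) - 1) = 0}.Finite := by
    have hfr : {x : ℂ | Q.IsRoot x}.Finite := Polynomial.finite_setOf_isRoot hQne
    have hsub : {k : ℕ | Q.eval ((k : ℂ) - 1) = 0}
        = (fun k : ℕ => ((k : ℂ) - 1)) ⁻¹' {x : ℂ | Q.IsRoot x} := rfl
    rw [hsub]
    refine Set.Finite.preimage ?_ hfr
    intro k _ k' _ hkk'
    have : (k : ℂ) = (k' : ℂ) := by linear_combination hkk'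
    exact_mod_cast this
  obtain ⟨N, hN⟩ := hfinroots.bddAbove
  -- high-order diagonal coefficients vanish
  have hdiagAll : ∀ k : ℕ, N < k → ∀ y : E, p k (fun _ => y) = 0 := by
    intro k hk y
    have hQk : Q.eval ((k : ℂ) - 1) ≠ 0 := by
      intro h
      have := hN (show k ∈ {k : ℕ | Q.eval ((k : ℂ) - 1) = 0} from h)
      omega
    have hc := hcoeff k y
    rw [← hQeval] at hc
    rcases smul_eq_zero.mp hc with h | h
    · exact absurd h hQk
    · exact h
  -- truncate the power series of `f`
  set q' : FormalMultilinearSeries ℂ E E := fun k => if k ≤ N then p k else 0 with hq'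
  have htrunc : HasFiniteFPowerSeriesOnBall f q' a (N + 1) r := by
    refine ⟨⟨?_, hpf.r_pos, ?_⟩, fun m hm => ?_⟩
    · rw [q'.radius_eq_top_of_forall_image_add_eq_zero (N + 1)
        (fun m => by simp only [hq']; rw [if_neg (by omega)])]
      exact le_top
    · intro y hy
      have hs := hpf.hasSum hy
      have heq : (fun k => q' k fun _ => y) = fun k => p k fun _ => y := by
        funext k
        by_cases hkN : k ≤ N
        · simp [hq', hkN]
        · simp [hq', hkN, hdiagAll k (by omega) y]
      rw [heq]
      exact hs
    · simp only [hq']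
      rw [if_neg (by omega)]
  exact ⟨N, fun k hk => FelsKaupAux.vanish (N + 1) htrunc k (by omega)⟩
end

section
/- Let V be a finite-dimensional real vector space and φ an endomorphism of V. If a and b are both cyclic vectors of φ, then there exists a real polynomial p such that the endomorphism p(φ) is invertible and p(φ)(a) = b. -/
/-!
Since `a` is cyclic, `b = p(φ) a` for some polynomial `p`. As `p(φ)` commutes with `φ`, its range
contains every `φ^k b`, hence the span of these, which is everything because `b` is cyclic.
A surjective endomorphism of a finite-dimensional space is invertible.
-/

open Polynomial Submodule

def IsCyclicVector {R M : Type*} [CommSemiring R] [AddCommMonoid M] [Module R M]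
    (φ : Module.End R M) (a : M) : Prop :=
  span R (Set.range fun k : ℕ => (φ ^ k) a) = ⊤

namespace IsCyclicVector

variable {R M : Type*} [CommSemiring R] [AddCommMonoid M] [Module R M] {φ : Module.End R M}

theorem exists_aeval_apply_eq {a : M} (ha : IsCyclicVector φ a) (b : M) :
    ∃ p : R[X], aeval φ p a = b := by
  have hle : span R (Set.range fun k : ℕ => (φ ^ k) a) ≤
      LinearMap.range ((LinearMap.applyₗ a).comp (aeval φ).toLinearMap) := by
    rw [span_le]
    rintro _ ⟨k, rfl⟩
    exact ⟨X ^ k, by simp⟩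
  exact hle (ha ▸ mem_top)

theorem range_aeval_eq_top {a : M} {p : R[X]} (hpa : IsCyclicVector φ (aeval φ p a)) :
    LinearMap.range (aeval φ p) = ⊤ := by
  rw [eq_top_iff, ← hpa, span_le]
  rintro _ ⟨k, rfl⟩
  have hcomm : Commute (aeval φ p) (φ ^ k) := by
    simpa using ((commute_X_pow p k).map (aeval φ)).symm
  exact ⟨(φ ^ k) a, by simpa using LinearMap.congr_fun hcomm.eq a⟩

end IsCyclicVector

/-- If `a` and `b` are both cyclic vectors of an endomorphism `φ` of a
finite-dimensional real vector space `V`, then there is a real polynomial `p` such that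
`p(φ)` is invertible and `p(φ)(a) = b`. -/
theorem cyclic_vectors_related_by_invertible_polynomial
    (V : Type*) [AddCommGroup V] [Module ℝ V] [FiniteDimensional ℝ V]
    (φ : V →ₗ[ℝ] V) (a b : V)
    (ha : Submodule.span ℝ (Set.range fun k : ℕ => (φ ^ k) a) = ⊤)
    (hb : Submodule.span ℝ (Set.range fun k : ℕ => (φ ^ k) b) = ⊤) :
    ∃ p : Polynomial ℝ, IsUnit (Polynomial.aeval φ p) ∧ (Polynomial.aeval φ p) a = b := by
  obtain ⟨p, hpab⟩ := IsCyclicVector.exists_aeval_apply_eq ha b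
  have hpa : IsCyclicVector φ (aeval φ p a) := hpab ▸ hb
  exact ⟨p, (LinearMap.isUnit_iff_range_eq_top _).mpr hpa.range_aeval_eq_top, hpab⟩
end

section
/- Let p ≥ q ≥ 1 be integers with n := p + q ≥ 3, let α ≥ 3 be an integer, and set ε_j = 1 for 1 ≤ j ≤ p and ε_j = −1 for p < j ≤ n. Let S = {x ∈ ℝⁿ : x ≠ 0 and ε₁x₁^α + ⋯ + ε_n x_n^α = 0}. Then every g ∈ GL(n, ℝ) with g(S) = S is the product of an invertible diagonal matrix with a permutation matrix; that is, there exist a permutation π of {1, …, n} and nonzero real numbers d₁, …, d_n such that (g x)_i = d_i · x_{π(i)} for all x ∈ ℝⁿ and all i. -/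
set_option maxHeartbeats 1000000
set_option synthInstance.maxHeartbeats 1000000

open Polynomial Finset

section Aux



/-- If polynomials `P m`, `m < α`, satisfy `∑ P m (s) u(s)^m = 0` for all large `s`,
where `u(s)^α = s^α + c`, `c ≠ 0`, then all `P m = 0`. -/
lemma lemL (α : ℕ) (hα : 1 ≤ α) (c : ℝ) (hc : c ≠ 0) (P : ℕ → Polynomial ℝ)
    (u : ℝ → ℝ) (s₀ : ℝ)
    (hu : ∀ s : ℝ, s₀ ≤ s → u s ^ α = s ^ α + c)
    (hvan : ∀ s : ℝ, s₀ ≤ s → ∑ m ∈ Finset.range α, (P m).eval s * u s ^ m = 0) :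
    ∀ m, m < α → P m = 0 := by
  classical
  by_contra hcon
  push_neg at hcon
  obtain ⟨m₀, hm₀, hPm₀⟩ := hcon
  -- the complex polynomial `v = s^α + c`
  set v : Polynomial ℂ := X ^ α + C (c : ℂ) with hv
  have hαpos : 0 < α := hα
  -- a root θ of v
  obtain ⟨θ, hθ⟩ := IsAlgClosed.exists_pow_nat_eq (-(c : ℂ)) hαpos
  have hθ0 : θ ≠ 0 := by
    intro h; rw [h, zero_pow hαpos.ne'] at hθ
    exact hc (by exact_mod_cast (neg_eq_zero.mp hθ.symm))
  have hvθ : v.eval θ = 0 := by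
    have h1 : v.eval θ = θ ^ α + (c : ℂ) := by rw [hv]; simp
    rw [h1, hθ]; ring
  -- the prime ideal (X - θ)
  set 𝓟 : Ideal (Polynomial ℂ) := Ideal.span {X - C θ} with h𝓟
  have hprime : 𝓟.IsPrime :=
    (Ideal.span_singleton_prime (Polynomial.X_sub_C_ne_zero θ)).mpr (Polynomial.prime_X_sub_C θ)
  -- `q₀ = Xᵅ - v` (in `R[X]`) is Eisenstein at (X - θ)
  set q₀ : Polynomial (Polynomial ℂ) := X ^ α - C v with hq₀
  have hmonic : q₀.Monic := monic_X_pow_sub_C v hαpos.ne'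
  have hdeg : q₀.natDegree = α := natDegree_X_pow_sub_C
  have hvmem : v ∈ 𝓟 := by
    rw [h𝓟, Ideal.mem_span_singleton]
    exact (dvd_iff_isRoot).mpr hvθ
  have hvnotmem : v ∉ 𝓟 ^ 2 := by
    rw [h𝓟, Ideal.span_singleton_pow, Ideal.mem_span_singleton]
    rintro ⟨w, hw⟩
    have hder : derivative v = C (α : ℂ) * X ^ (α - 1) := by
      rw [hv, derivative_add, derivative_X_pow, derivative_C, add_zero]
    have h0 : (derivative v).eval θ = 0 := by
      rw [hw]
      simp [derivative_mul, derivative_pow, eval_mul, eval_add, eval_pow, eval_sub]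
    rw [hder] at h0
    simp only [eval_mul, eval_pow, eval_C, eval_X, mul_eq_zero] at h0
    rcases h0 with h | h
    · exact (Nat.cast_ne_zero.mpr hαpos.ne' : (α:ℂ) ≠ 0) h
    · exact pow_ne_zero _ hθ0 h
  have hEis : q₀.IsEisensteinAt 𝓟 := by
    refine hmonic.isEisensteinAt_of_mem_of_notMem hprime.ne_top ?_ ?_
    · intro i hi
      rw [hdeg] at hi
      rcases Nat.eq_zero_or_pos i with rfl | hi0
      · have h00 : q₀.coeff 0 = -v := by
          simp [hq₀, coeff_X_pow, (show ¬ (0 : ℕ) = α by omega)]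
        rw [h00]
        exact neg_mem hvmem
      · have h00 : q₀.coeff i = 0 := by
          simp [hq₀, coeff_X_pow, coeff_C, hi.ne, hi0.ne']
        rw [h00]
        exact zero_mem _
    · have h00 : q₀.coeff 0 = -v := by
        simp [hq₀, coeff_X_pow, (show ¬ (0 : ℕ) = α by omega)]
      rw [h00]
      intro h
      exact hvnotmem (by simpa using neg_mem h)
  have hirr₀ : Irreducible q₀ :=
    hEis.irreducible hprime hmonic.isPrimitive (by rw [hdeg]; exact hαpos)
  have hirrK : Irreducible (q₀.map (algebraMap (Polynomial ℂ) (FractionRing (Polynomial ℂ)))) :=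
    (hmonic.irreducible_iff_irreducible_map_fraction_map).mp hirr₀
  -- the relation polynomial `rr₀ = ∑ P m · Xᵐ` over `ℂ[s]`
  set Pc : ℕ → Polynomial ℂ := fun m => (P m).map (algebraMap ℝ ℂ) with hPc
  set rr₀ : Polynomial (Polynomial ℂ) := ∑ m ∈ Finset.range α, C (Pc m) * X ^ m with hrr₀
  have hcoeff : ∀ m, m < α → rr₀.coeff m = Pc m := by
    intro m hm
    rw [hrr₀, finset_sum_coeff, Finset.sum_eq_single m]
    · simp [coeff_C_mul, coeff_X_pow]
    · intro b _ hbm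
      simp [coeff_C_mul, coeff_X_pow, (Ne.symm hbm : ¬ m = b)]
    · intro h; exact absurd (Finset.mem_range.mpr hm) h
  have hrrne : rr₀ ≠ 0 := by
    intro h
    apply hPm₀
    have h2 := hcoeff m₀ hm₀
    rw [h, coeff_zero] at h2
    have h3 : Pc m₀ = 0 := h2.symm
    rw [hPc] at h3
    exact (Polynomial.map_eq_zero_iff (algebraMap ℝ ℂ).injective).mp h3
  have hdegrr : rr₀.degree < (α : ℕ) := by
    rw [hrr₀]
    apply lt_of_le_of_lt (degree_sum_le _ _)
    rw [Finset.sup_lt_iff (by exact_mod_cast WithBot.bot_lt_coe α)]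
    intro m hm
    apply lt_of_le_of_lt (degree_C_mul_X_pow_le m (Pc m))
    exact_mod_cast Finset.mem_range.mp hm
  -- pass to the fraction field and get a Bézout relation
  have hinj : Function.Injective (algebraMap (Polynomial ℂ) (FractionRing (Polynomial ℂ))) :=
    IsFractionRing.injective _ _
  have hrrKne : rr₀.map (algebraMap (Polynomial ℂ) (FractionRing (Polynomial ℂ))) ≠ 0 := by
    rwa [Ne, Polynomial.map_eq_zero_iff hinj]
  have hnotdvd : ¬ (q₀.map (algebraMap (Polynomial ℂ) (FractionRing (Polynomial ℂ))) ∣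
      rr₀.map (algebraMap (Polynomial ℂ) (FractionRing (Polynomial ℂ)))) := by
    intro hdvd
    have h1 := Polynomial.degree_le_of_dvd hdvd hrrKne
    rw [Polynomial.degree_map_eq_of_injective hinj, Polynomial.degree_map_eq_of_injective hinj,
      hq₀, degree_X_pow_sub_C hαpos] at h1
    exact absurd (lt_of_le_of_lt h1 hdegrr) (lt_irrefl _)
  haveI : IsPrincipalIdealRing (Polynomial (FractionRing (Polynomial ℂ))) :=
    @EuclideanDomain.to_principal_ideal_domain _ Polynomial.instEuclideanDomain
  haveI : IsBezout (Polynomial (FractionRing (Polynomial ℂ))) :=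
    IsBezout.of_isPrincipalIdealRing _
  obtain ⟨A, B, hAB⟩ := hirrK.coprime_iff_not_dvd.mpr hnotdvd
  obtain ⟨dA, hdA⟩ := IsLocalization.integerNormalization_map_to_map
    (nonZeroDivisors (Polynomial ℂ)) A
  obtain ⟨dB, hdB⟩ := IsLocalization.integerNormalization_map_to_map
    (nonZeroDivisors (Polynomial ℂ)) B
  set intA := IsLocalization.integerNormalization (nonZeroDivisors (Polynomial ℂ)) A with hintA
  set intB := IsLocalization.integerNormalization (nonZeroDivisors (Polynomial ℂ)) B with hintB
  -- clear denominators: an identity in `(ℂ[s])[X]`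
  have key : (C (dB : Polynomial ℂ) * intA) * q₀ + (C (dA : Polynomial ℂ) * intB) * rr₀
      = C ((dA : Polynomial ℂ) * (dB : Polynomial ℂ)) := by
    apply Polynomial.map_injective (algebraMap (Polynomial ℂ) (FractionRing (Polynomial ℂ))) hinj
    rw [Polynomial.map_add, Polynomial.map_mul, Polynomial.map_mul, Polynomial.map_mul,
      Polynomial.map_mul, map_C, map_C, map_C, hdA, hdB,
      ← IsScalarTower.algebraMap_smul (FractionRing (Polynomial ℂ)) ((dA : Polynomial ℂ)) A,
      ← IsScalarTower.algebraMap_smul (FractionRing (Polynomial ℂ)) ((dB : Polynomial ℂ)) B,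
      Polynomial.smul_eq_C_mul, Polynomial.smul_eq_C_mul]
    simp only [map_mul]
    linear_combination (C (algebraMap (Polynomial ℂ) (FractionRing (Polynomial ℂ))
      (dA : Polynomial ℂ)) * C (algebraMap (Polynomial ℂ) (FractionRing (Polynomial ℂ))
      (dB : Polynomial ℂ))) * hAB
  -- evaluate the identity at `(s, u s)`
  have heval : ∀ s : ℝ, s₀ ≤ s → ((dA : Polynomial ℂ) * (dB : Polynomial ℂ)).eval (s : ℂ) = 0 := by
    intro s hs
    have hq0 : Polynomial.eval₂ (Polynomial.evalRingHom (s : ℂ)) ((u s : ℂ)) q₀ = 0 := by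
      rw [hq₀]
      simp only [eval₂_sub, eval₂_pow, eval₂_X, eval₂_C, coe_evalRingHom, hv, eval_add,
        eval_pow, eval_X, eval_C]
      have h5 := hu s hs
      have h6 : ((u s : ℂ)) ^ α = ((s : ℂ)) ^ α + (c : ℂ) := by
        exact_mod_cast congrArg Complex.ofReal h5
      rw [h6]
      ring
    have hrr0 : Polynomial.eval₂ (Polynomial.evalRingHom (s : ℂ)) ((u s : ℂ)) rr₀ = 0 := by
      rw [hrr₀, eval₂_finset_sum]
      have hterm : ∀ m, Polynomial.eval₂ (Polynomial.evalRingHom (s : ℂ)) ((u s : ℂ))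
          (C (Pc m) * X ^ m) = ((((P m).eval s : ℝ) : ℂ)) * ((u s : ℂ)) ^ m := by
        intro m
        rw [eval₂_mul, eval₂_C, eval₂_pow, eval₂_X, coe_evalRingHom, hPc]
        congr 1
        have h7 : ((s : ℂ)) = algebraMap ℝ ℂ s := rfl
        rw [Polynomial.eval_map, h7, Polynomial.eval₂_at_apply]
        rfl
      rw [Finset.sum_congr rfl (fun m _ => hterm m)]
      have h8 := hvan s hs
      have h9 : ∑ m ∈ Finset.range α, ((((P m).eval s : ℝ) : ℂ)) * ((u s : ℂ)) ^ m
          = (((∑ m ∈ Finset.range α, (P m).eval s * u s ^ m : ℝ)) : ℂ) := by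
        push_cast
        rfl
      rw [h9, h8]
      norm_num
    have h3 := congrArg (Polynomial.eval₂ (Polynomial.evalRingHom (s : ℂ)) ((u s : ℂ))) key
    rw [eval₂_add, eval₂_mul, eval₂_mul, eval₂_mul, eval₂_mul, hq0, hrr0, eval₂_C] at h3
    simpa using h3
  -- a nonzero polynomial with infinitely many roots: contradiction
  have hdne : ((dA : Polynomial ℂ) * (dB : Polynomial ℂ)) ≠ 0 :=
    mul_ne_zero (nonZeroDivisors.coe_ne_zero dA) (nonZeroDivisors.coe_ne_zero dB)
  apply hdne
  apply Polynomial.eq_zero_of_infinite_isRoot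
  apply Set.Infinite.mono (s := (fun s : ℝ => (s : ℂ)) '' Set.Ici s₀)
    (h := by rintro x ⟨s, hs, rfl⟩; exact heval s hs)
  exact Set.Infinite.image (fun a _ b _ h => by exact_mod_cast h) (Set.Ici_infinite s₀)





lemma homog_prop {n : ℕ} (hn : 3 ≤ n) (α : ℕ) (hα : 3 ≤ α)
    (ε : Fin n → ℝ) (hεne : ∀ j, ε j ≠ 0)
    (hεO : ε ⟨0, by omega⟩ = 1) (hεN : ε ⟨n-1, by omega⟩ = -1)
    (b : Fin n → Fin n → ℝ)
    (hvan : ∀ x : Fin n → ℝ, x ≠ 0 → ∑ j, ε j * x j ^ α = 0 →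
      ∑ j, ε j * (∑ k, b j k * x k) ^ α = 0) :
    ∃ c : ℝ, ∀ x : Fin n → ℝ,
      ∑ j, ε j * (∑ k, b j k * x k) ^ α = c * ∑ j, ε j * x j ^ α := by
  classical
  set N : Fin n := ⟨n-1, by omega⟩ with hN
  set O : Fin n := ⟨0, by omega⟩ with hO
  have hON : O ≠ N := by
    simp only [hO, hN, Ne, Fin.mk.injEq]
    omega
  set d : (Fin n → ℝ) → Fin n → ℝ := fun z j => ∑ k ∈ univ.erase N, b j k * z k with hd
  set G : (Fin n → ℝ) → ℝ := fun z => ∑ k ∈ univ.erase N, ε k * z k ^ α with hG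
  set e : ℝ := ∑ j, ε j * b j N ^ α with he
  set r : ℕ → (Fin n → ℝ) → ℝ := fun m z =>
    (α.choose m : ℝ) * (∑ j, ε j * (d z j) ^ (α - m) * (b j N) ^ m)
    + (if m = 0 then e * G z else 0) with hr
  -- the inner linear form evaluated at an update of the `N`-th coordinate
  have hsplit : ∀ (z : Fin n → ℝ) (t : ℝ) (j : Fin n),
      ∑ k, b j k * (Function.update z N t) k = b j N * t + d z j := by
    intro z t j
    rw [← Finset.add_sum_erase _ _ (mem_univ N), Function.update_self]
    congr 1
    apply Finset.sum_congr rfl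
    intro k hk
    rw [Function.update_of_ne (Finset.ne_of_mem_erase hk)]
  have hFsplit : ∀ (z : Fin n → ℝ) (t : ℝ),
      ∑ j, ε j * (Function.update z N t) j ^ α = -t ^ α + G z := by
    intro z t
    rw [← Finset.add_sum_erase _ _ (mem_univ N), Function.update_self, hεN]
    congr 1
    · ring
    · apply Finset.sum_congr rfl
      intro k hk
      rw [Function.update_of_ne (Finset.ne_of_mem_erase hk)]
  -- binomial expansion
  have idA : ∀ (z : Fin n → ℝ) (t : ℝ),
      ∑ j, ε j * (∑ k, b j k * (Function.update z N t) k) ^ α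
      = (∑ m ∈ range α, (α.choose m : ℝ) * (∑ j, ε j * (d z j) ^ (α - m) * (b j N) ^ m) * t ^ m)
        + e * t ^ α := by
    intro z t
    have expand : ∀ j : Fin n, ε j * (∑ k, b j k * (Function.update z N t) k) ^ α
        = ∑ m ∈ range (α+1),
          (α.choose m : ℝ) * (ε j * (d z j) ^ (α - m) * (b j N) ^ m) * t ^ m := by
      intro j
      rw [hsplit z t j, add_pow, Finset.mul_sum]
      apply Finset.sum_congr rfl
      intro m hm
      rw [mul_pow]
      ring
    rw [Finset.sum_congr rfl (fun j _ => expand j), Finset.sum_comm]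
    rw [Finset.sum_range_succ]
    congr 1
    · apply Finset.sum_congr rfl
      intro m hm
      rw [Finset.mul_sum, Finset.sum_mul]
    · rw [he, Finset.sum_mul]
      apply Finset.sum_congr rfl
      intro j _
      rw [Nat.choose_self, Nat.sub_self]
      simp
  -- the combined identity
  have idC : ∀ (z : Fin n → ℝ) (t : ℝ),
      ∑ j, ε j * (∑ k, b j k * (Function.update z N t) k) ^ α
      = (∑ m ∈ range α, r m z * t ^ m)
        - e * ∑ j, ε j * (Function.update z N t) j ^ α := by
    intro z t
    rw [idA z t, hFsplit z t]
    have hsum : ∑ m ∈ range α, r m z * t ^ m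
        = (∑ m ∈ range α, (α.choose m : ℝ) * (∑ j, ε j * (d z j) ^ (α - m) * (b j N) ^ m) * t ^ m)
          + e * G z := by
      rw [hr]
      simp only [add_mul]
      rw [Finset.sum_add_distrib]
      congr 1
      have h1 : ∀ m ∈ range α, (if m = 0 then e * G z else 0) * t ^ m
          = (if m = 0 then e * G z * t ^ m else 0) := by
        intro m _
        split <;> simp
      rw [Finset.sum_congr rfl h1, Finset.sum_ite_eq' (range α) 0 (fun m => e * G z * t ^ m)]
      simp [show (0:ℕ) ∈ range α from Finset.mem_range.mpr (by omega)]
    rw [hsum]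
    ring
  -- vanishing of the remainder coefficients at points of the cone
  have vanish : ∀ (z : Fin n → ℝ) (t : ℝ), Function.update z N t ≠ 0 →
      G z - t ^ α = 0 → ∑ m ∈ range α, r m z * t ^ m = 0 := by
    intro z t hne hF
    have hF' : ∑ j, ε j * (Function.update z N t) j ^ α = 0 := by
      rw [hFsplit z t]
      linarith [hF]
    have h0 := hvan _ hne hF'
    rw [idC z t, hF'] at h0
    linarith [h0]
  -- the polynomial representing `w ↦ r m (update z i w)`
  set Rp : ℕ → Fin n → (Fin n → ℝ) → Polynomial ℝ := fun m i z =>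
    Polynomial.C ((α.choose m : ℝ)) *
      (∑ j, Polynomial.C (ε j * b j N ^ m) *
        (Polynomial.C (b j i) * Polynomial.X
          + Polynomial.C (∑ k ∈ (univ.erase N).erase i, b j k * z k)) ^ (α - m))
    + (if m = 0 then Polynomial.C e * (Polynomial.C (ε i) * Polynomial.X ^ α
        + Polynomial.C (∑ k ∈ (univ.erase N).erase i, ε k * z k ^ α)) else 0) with hRp
  have hdsplit : ∀ (i : Fin n), i ≠ N → ∀ (z : Fin n → ℝ) (w : ℝ) (j : Fin n),
      d (Function.update z i w) j
        = b j i * w + ∑ k ∈ (univ.erase N).erase i, b j k * z k := by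
    intro i hi z w j
    rw [hd]
    simp only
    rw [← Finset.add_sum_erase _ _ (Finset.mem_erase.mpr ⟨hi, mem_univ i⟩),
      Function.update_self]
    congr 1
    apply Finset.sum_congr rfl
    intro k hk
    rw [Function.update_of_ne (Finset.ne_of_mem_erase hk)]
  have hGsplit : ∀ (i : Fin n), i ≠ N → ∀ (z : Fin n → ℝ) (w : ℝ),
      G (Function.update z i w)
        = ε i * w ^ α + ∑ k ∈ (univ.erase N).erase i, ε k * z k ^ α := by
    intro i hi z w
    rw [hG]
    simp only
    rw [← Finset.add_sum_erase _ _ (Finset.mem_erase.mpr ⟨hi, mem_univ i⟩),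
      Function.update_self]
    congr 1
    apply Finset.sum_congr rfl
    intro k hk
    rw [Function.update_of_ne (Finset.ne_of_mem_erase hk)]
  have evalR : ∀ (m : ℕ) (i : Fin n), i ≠ N → ∀ (z : Fin n → ℝ) (w : ℝ),
      (Rp m i z).eval w = r m (Function.update z i w) := by
    intro m i hi z w
    rw [hRp, hr]
    simp only [eval_add, eval_mul, eval_C, eval_finset_sum, eval_pow, eval_X, apply_ite (eval w),
      eval_zero]
    congr 1
    · rw [Finset.mul_sum, Finset.mul_sum]
      apply Finset.sum_congr rfl
      intro j _
      rw [hdsplit i hi z w j]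
      ring
    · split
      · rw [hGsplit i hi z w]
      · rfl
  -- Step A : if the residual constant is nonzero, all coefficients vanish along the O-line
  have subA : ∀ z : Fin n → ℝ,
      (∑ k ∈ (univ.erase N).erase O, ε k * z k ^ α) ≠ 0 →
      ∀ m, m < α → ∀ s : ℝ, r m (Function.update z O s) = 0 := by
    intro z hc₀ m hm s
    set c₀ : ℝ := ∑ k ∈ (univ.erase N).erase O, ε k * z k ^ α with hc₀def
    set s₀ : ℝ := 1 + |c₀| with hs₀
    set u : ℝ → ℝ := fun s => (s ^ α + c₀) ^ ((α : ℝ))⁻¹ with hu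
    have hpos : ∀ s : ℝ, s₀ ≤ s → (0:ℝ) ≤ s ^ α + c₀ := by
      intro s hs
      have h1 : (1:ℝ) ≤ s := by
        rw [hs₀] at hs
        have := abs_nonneg c₀
        linarith
      have h2 : s ≤ s ^ α := le_self_pow₀ (by linarith) (by omega)
      have h3 : -|c₀| ≤ c₀ := neg_abs_le c₀
      rw [hs₀] at hs
      linarith
    have hupow : ∀ s : ℝ, s₀ ≤ s → u s ^ α = s ^ α + c₀ := by
      intro s hs
      rw [hu]
      exact Real.rpow_inv_natCast_pow (hpos s hs) (by omega)
    have hvan' : ∀ s : ℝ, s₀ ≤ s →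
        ∑ m ∈ range α, (Rp m O z).eval s * u s ^ m = 0 := by
      intro s hs
      have h1 : ∀ m ∈ range α, (Rp m O z).eval s * u s ^ m
          = r m (Function.update z O s) * u s ^ m := by
        intro m _
        rw [evalR m O hON z s]
      rw [Finset.sum_congr rfl h1]
      apply vanish
      · intro h0
        have h1 := congrFun h0 O
        rw [Function.update_of_ne hON, Function.update_self] at h1
        have : (1:ℝ) ≤ s := by
          rw [hs₀] at hs
          have := abs_nonneg c₀
          linarith
        simp at h1
        linarith
      · rw [hGsplit O hON z s, hεO, hupow s hs, one_mul]
        ring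
    have hall := lemL α (by omega) c₀ hc₀ (fun m => Rp m O z) u s₀ hupow hvan'
    have h2 : Rp m O z = 0 := hall m hm
    have h3 := evalR m O hON z s
    rw [h2, eval_zero] at h3
    exact h3.symm
  -- Step B : all coefficients vanish everywhere
  have subB : ∀ m, m < α → ∀ z : Fin n → ℝ, r m z = 0 := by
    intro m hm z
    set j₁ : Fin n := ⟨1, by omega⟩ with hj₁
    have hj₁N : j₁ ≠ N := by
      simp only [hj₁, hN, Ne, Fin.mk.injEq]
      omega
    have hj₁O : j₁ ≠ O := by
      simp only [hj₁, hO, Ne, Fin.mk.injEq]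
      omega
    set κ : ℝ := ∑ k ∈ ((univ.erase N).erase O).erase j₁, ε k * z k ^ α with hκ
    have hsplitκ : ∀ w : ℝ, (∑ k ∈ (univ.erase N).erase O, ε k * (Function.update z j₁ w) k ^ α)
        = ε j₁ * w ^ α + κ := by
      intro w
      rw [← Finset.add_sum_erase _ _
        (Finset.mem_erase.mpr ⟨hj₁O, Finset.mem_erase.mpr ⟨hj₁N, mem_univ j₁⟩⟩),
        Function.update_self]
      congr 1
      rw [hκ]
      apply Finset.sum_congr rfl
      intro k hk
      rw [Function.update_of_ne (Finset.ne_of_mem_erase hk)]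
    set pb : Polynomial ℝ := Polynomial.C (ε j₁) * Polynomial.X ^ α + Polynomial.C κ with hpb
    have hpbne : pb ≠ 0 := by
      intro h0
      have h1 : pb.coeff α = ε j₁ := by
        rw [hpb]
        simp [coeff_C, (show ¬ (α = 0) by omega)]
      rw [h0, coeff_zero] at h1
      exact hεne j₁ h1.symm
    have hgood : ∀ w : ℝ, pb.eval w ≠ 0 → r m (Function.update z j₁ w) = 0 := by
      intro w hw
      have hc₀ : (∑ k ∈ (univ.erase N).erase O, ε k * (Function.update z j₁ w) k ^ α) ≠ 0 := by
        rw [hsplitκ w]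
        intro h0
        apply hw
        rw [hpb]
        simp only [eval_add, eval_mul, eval_C, eval_pow, eval_X]
        linarith
      have h3 := subA (Function.update z j₁ w) hc₀ m hm ((Function.update z j₁ w) O)
      rw [Function.update_eq_self] at h3
      exact h3
    have hRpz : Rp m j₁ z = 0 := by
      apply Polynomial.eq_zero_of_infinite_isRoot
      apply Set.Infinite.mono (s := {w : ℝ | pb.IsRoot w}ᶜ)
      · intro w hw
        have h4 := hgood w hw
        show (Rp m j₁ z).IsRoot w
        rw [Polynomial.IsRoot, evalR m j₁ hj₁N z w, h4]
      · exact Set.Finite.infinite_compl (Polynomial.finite_setOf_isRoot hpbne)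
    have h5 := evalR m j₁ hj₁N z (z j₁)
    rw [Function.update_eq_self, hRpz, eval_zero] at h5
    exact h5.symm
  -- conclusion
  refine ⟨-e, fun x => ?_⟩
  have h6 := idC x (x N)
  rw [Function.update_eq_self] at h6
  rw [h6]
  have h7 : ∀ m ∈ range α, r m x * x N ^ m = 0 := by
    intro m hm
    rw [subB m (Finset.mem_range.mp hm) x, zero_mul]
  rw [Finset.sum_congr rfl h7]
  simp




lemma rows_orthogonal {n : ℕ} (α : ℕ) (hα : 3 ≤ α) (ε : Fin n → ℝ) (hεne : ∀ j, ε j ≠ 0)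
    (c : ℝ) (b : Fin n → Fin n → ℝ)
    (hkey : ∀ x : Fin n → ℝ, ∑ j, ε j * (∑ k, b j k * x k) ^ α = c * ∑ j, ε j * x j ^ α)
    (hsurj : ∀ y : Fin n → ℝ, ∃ x : Fin n → ℝ, ∀ j, (∑ k, b j k * x k) = y j) :
    ∀ j k l, k ≠ l → b j k * b j l = 0 := by
  classical
  intro j₀ k l hkl
  -- a generic derivative computation
  have helper : ∀ (β : ℕ) (A B C : Fin n → ℝ) (s₀ : ℝ),
      HasDerivAt (fun s : ℝ => ∑ j, (A j + s * B j) ^ β * C j)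
        (∑ j, (β : ℝ) * (A j + s₀ * B j) ^ (β - 1) * B j * C j) s₀ := by
    intro β A B C s₀
    apply HasDerivAt.fun_sum
    intro j _
    have h1 : HasDerivAt (fun s : ℝ => A j + s * B j) (B j) s₀ := by
      simpa using ((hasDerivAt_id s₀).mul_const (B j)).const_add (A j)
    exact (h1.pow β).mul_const (C j)
  obtain ⟨x₀, hx₀⟩ := hsurj (Pi.single j₀ 1)
  set w : Fin n → ℝ := Pi.single j₀ 1 with hw
  set ek : Fin n → ℝ := Pi.single k 1 with hek
  set el : Fin n → ℝ := Pi.single l 1 with hel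
  have hsingle : ∀ (j i : Fin n), ∑ kk, b j kk * (Pi.single i (1:ℝ) : Fin n → ℝ) kk = b j i := by
    intro j i
    rw [Finset.sum_eq_single i]
    · simp
    · intro kk _ hkk
      simp [Pi.single_apply, hkk]
    · intro h; exact absurd (mem_univ i) h
  -- first derivative (in `s`)
  have step1 : ∀ t s : ℝ,
      ∑ j, (α : ℝ) * ((w j + t * b j k) + s * b j l) ^ (α - 1) * b j l * ε j
      = c * ∑ j, (α : ℝ) * ((x₀ j + t * ek j) + s * el j) ^ (α - 1)
          * el j * ε j := by
    intro t s
    have hfeq : (fun s : ℝ => ∑ j, ((fun j => w j + t * b j k) j + s * b j l) ^ α * ε j)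
        = (fun s : ℝ => c * ∑ j, ((fun j => x₀ j + t * ek j) j
            + s * el j) ^ α * ε j) := by
      funext s'
      have hx := hkey (fun jj => x₀ jj + t * ek jj + s' * el jj)
      have hlin : ∀ j, (∑ kk, b j kk * (x₀ kk + t * ek kk + s' * el kk))
          = (w j + t * b j k) + s' * b j l := by
        intro j
        have : ∀ kk, b j kk * (x₀ kk + t * ek kk + s' * el kk)
            = b j kk * x₀ kk + t * (b j kk * ek kk)
              + s' * (b j kk * el kk) := by
          intro kk; ring
        rw [Finset.sum_congr rfl (fun kk _ => this kk), Finset.sum_add_distrib,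
          Finset.sum_add_distrib, ← Finset.mul_sum, ← Finset.mul_sum, hek, hel, hsingle j k,
          hsingle j l, hx₀ j]
      rw [Finset.sum_congr rfl (fun j _ => by rw [hlin j])] at hx
      have hL : ∑ j, ε j * ((w j + t * b j k) + s' * b j l) ^ α
          = ∑ j, ((w j + t * b j k) + s' * b j l) ^ α * ε j :=
        Finset.sum_congr rfl (fun j _ => by ring)
      have hR : ∑ j, ε j * (x₀ j + t * ek j + s' * el j) ^ α
          = ∑ j, ((x₀ j + t * ek j) + s' * el j) ^ α * ε j :=
        Finset.sum_congr rfl (fun j _ => by ring)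
      rw [hL, hR] at hx
      exact hx
    have hd1 := helper α (fun j => w j + t * b j k) (fun j => b j l) ε s
    have hd2 := (helper α (fun j => x₀ j + t * ek j) (fun j => el j)
      ε s).const_mul c
    rw [hfeq] at hd1
    exact hd1.unique hd2
  -- second derivative (in `t`)
  have step2 : (fun t : ℝ => ∑ j, (w j + t * b j k) ^ (α - 1) * ((α : ℝ) * b j l * ε j))
      = (fun t : ℝ => c * ∑ j, (x₀ j + t * ek j) ^ (α - 1)
          * ((α : ℝ) * el j * ε j)) := by
    funext t
    have h1 := step1 t 0
    have hL : ∑ j, (α : ℝ) * ((w j + t * b j k) + 0 * b j l) ^ (α - 1) * b j l * ε j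
        = ∑ j, (w j + t * b j k) ^ (α - 1) * ((α : ℝ) * b j l * ε j) :=
      Finset.sum_congr rfl (fun j _ => by ring_nf)
    have hR : ∑ j, (α : ℝ) * ((x₀ j + t * ek j) + 0 * el j) ^ (α - 1)
          * el j * ε j
        = ∑ j, (x₀ j + t * ek j) ^ (α - 1) * ((α : ℝ) * el j * ε j) :=
      Finset.sum_congr rfl (fun j _ => by ring_nf)
    rw [hL, hR] at h1
    exact h1
  have hd3 := helper (α - 1) w (fun j => b j k) (fun j => (α : ℝ) * b j l * ε j) 0
  have hd4 := (helper (α - 1) x₀ (fun j => ek j)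
    (fun j => (α : ℝ) * el j * ε j) 0).const_mul c
  rw [step2] at hd3
  have hfinal := hd3.unique hd4
  -- the right-hand side vanishes since `single k * single l = 0`
  have hR0 : c * ∑ j, ((α - 1 : ℕ) : ℝ) * (x₀ j + 0 * ek j) ^ (α - 1 - 1)
      * ek j * ((α : ℝ) * el j * ε j) = 0 := by
    rw [Finset.sum_eq_zero, mul_zero]
    intro j _
    rcases eq_or_ne j k with rfl | hjk
    · have h9 : el j = 0 := by
        simp [hel, Pi.single_apply, hkl]
      rw [h9]
      ring
    · have h9 : ek j = 0 := by
        simp [hek, Pi.single_apply, hjk]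
      rw [h9]
      ring
  rw [hR0] at hfinal
  -- the left-hand side reduces to the single term `j = j₀`
  have hL0 : ∑ j, ((α - 1 : ℕ) : ℝ) * (w j + 0 * b j k) ^ (α - 1 - 1) * b j k
      * ((α : ℝ) * b j l * ε j)
      = ((α - 1 : ℕ) : ℝ) * b j₀ k * ((α : ℝ) * b j₀ l * ε j₀) := by
    rw [Finset.sum_eq_single j₀]
    · rw [hw]
      simp
    · intro j _ hj
      rw [hw]
      have h5 : (Pi.single j₀ 1 : Fin n → ℝ) j = 0 := by
        simp [Pi.single_apply, hj]
      rw [h5]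
      have h6 : ((0:ℝ) + 0 * b j k) ^ (α - 1 - 1) = 0 := by
        rw [zero_add, zero_mul, zero_pow (by omega)]
      rw [h6]
      ring
    · intro h; exact absurd (mem_univ j₀) h
  rw [hL0] at hfinal
  have hα1 : ((α - 1 : ℕ) : ℝ) ≠ 0 := by
    have : α - 1 ≠ 0 := by omega
    exact_mod_cast Nat.cast_ne_zero.mpr this
  have hαne : (α : ℝ) ≠ 0 := Nat.cast_ne_zero.mpr (by omega)
  rcases mul_eq_zero.mp hfinal with h | h
  · rcases mul_eq_zero.mp h with h | h
    · exact absurd h hα1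
    · rw [h, zero_mul]
  · rcases mul_eq_zero.mp h with h | h
    · rcases mul_eq_zero.mp h with h | h
      · exact absurd h hαne
      · rw [h, mul_zero]
    · exact absurd h (hεne j₀)

end Aux

/-- Let `p ≥ q ≥ 1`, `n = p + q ≥ 3`, `α ≥ 3` an integer, and let
`S = {x ∈ ℝⁿ : x ≠ 0, ∑ ε_j x_j^α = 0}` where `ε_j = 1` for `j < p` and `ε_j = -1`
otherwise.  Every linear automorphism `g` of `ℝⁿ` with `g(S) = S` is the product of an
invertible diagonal matrix with a permutation matrix. -/
theorem linear_automorphism_of_cone_is_diagonal_times_permutation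
    (p q n α : ℕ) (hpq : q ≤ p) (hq : 1 ≤ q) (hn : n = p + q) (hn3 : 3 ≤ n) (hα : 3 ≤ α)
    (ε : Fin n → ℝ) (hε : ∀ j : Fin n, ε j = if (j : ℕ) < p then 1 else -1)
    (S : Set (Fin n → ℝ))
    (hS : S = {x : Fin n → ℝ | x ≠ 0 ∧ ∑ j : Fin n, ε j * x j ^ α = 0})
    (g : (Fin n → ℝ) ≃ₗ[ℝ] (Fin n → ℝ)) (hg : g '' S = S) :
    ∃ (π : Equiv.Perm (Fin n)) (dvec : Fin n → ℝ), (∀ i, dvec i ≠ 0) ∧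
      ∀ (x : Fin n → ℝ) (i : Fin n), g x i = dvec i * x (π i) := by

  classical
  have hp2 : 1 ≤ p := by omega
  -- the matrix of `g`
  set b : Fin n → Fin n → ℝ := fun j k => g (Pi.single k 1) j with hb
  have hsingle_smul : ∀ (x : Fin n → ℝ) (k : Fin n),
      (x k) • (Pi.single k 1 : Fin n → ℝ) = Pi.single k (x k) := by
    intro x k
    rw [← Pi.single_smul]
    norm_num
  have hgx : ∀ (x : Fin n → ℝ) (j : Fin n), g x j = ∑ k, b j k * x k := by
    intro x j
    have h2 : g x = ∑ k, (x k) • g (Pi.single k 1) := by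
      conv_lhs => rw [← Finset.univ_sum_single x,
        ← Finset.sum_congr rfl (fun k _ => hsingle_smul x k)]
      rw [map_sum]
      exact Finset.sum_congr rfl (fun k _ => by rw [map_smul])
    rw [h2, Finset.sum_apply]
    apply Finset.sum_congr rfl
    intro k _
    rw [Pi.smul_apply, smul_eq_mul, hb]
    ring
  -- basic facts about ε
  have hεne : ∀ j, ε j ≠ 0 := by
    intro j
    rw [hε j]
    split <;> norm_num
  have hεO : ε ⟨0, by omega⟩ = 1 := by
    rw [hε]
    simp only [if_pos (show (0:ℕ) < p by omega)]
  have hεN : ε ⟨n-1, by omega⟩ = -1 := by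
    rw [hε]
    simp only
    rw [if_neg (by omega)]
  -- vanishing on the cone
  have hvan : ∀ x : Fin n → ℝ, x ≠ 0 → ∑ j, ε j * x j ^ α = 0 →
      ∑ j, ε j * (∑ k, b j k * x k) ^ α = 0 := by
    intro x hx0 hxF
    have hxS : x ∈ S := by
      rw [hS]
      exact ⟨hx0, hxF⟩
    have hgS : g x ∈ S := by
      rw [← hg]
      exact Set.mem_image_of_mem _ hxS
    rw [hS] at hgS
    have h3 := hgS.2
    rw [Finset.sum_congr rfl (fun j _ => by rw [hgx x j])] at h3
    exact h3
  obtain ⟨c, hc⟩ := homog_prop hn3 α hα ε hεne hεO hεN b hvan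
  -- `c ≠ 0`
  have hkey : ∀ x : Fin n → ℝ, g x ≠ 0 → True := fun _ _ => trivial
  have hFone : ∑ j, ε j * ((Pi.single (⟨0, by omega⟩ : Fin n) 1 : Fin n → ℝ) j) ^ α = 1 := by
    rw [Finset.sum_eq_single (⟨0, by omega⟩ : Fin n)]
    · rw [hεO]
      simp
    · intro j _ hj
      rw [Pi.single_apply, if_neg hj]
      rw [zero_pow (by omega), mul_zero]
    · intro h; exact absurd (mem_univ _) h
  have hcne : c ≠ 0 := by
    intro hc0
    set y : Fin n → ℝ := Pi.single (⟨0, by omega⟩ : Fin n) 1 with hy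
    have h4 := hc (g.symm y)
    rw [Finset.sum_congr rfl (fun j _ => by rw [← hgx (g.symm y) j]),
      LinearEquiv.apply_symm_apply, hc0, zero_mul] at h4
    rw [hFone] at h4
    exact one_ne_zero h4
  -- surjectivity of the matrix
  have hsurj : ∀ y : Fin n → ℝ, ∃ x : Fin n → ℝ, ∀ j, (∑ k, b j k * x k) = y j := by
    intro y
    refine ⟨g.symm y, fun j => ?_⟩
    rw [← hgx (g.symm y) j, LinearEquiv.apply_symm_apply]
  have hrows := rows_orthogonal α hα ε hεne c b hc hsurj
  -- every row of the matrix is nonzero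
  have hrowne : ∀ j, ∃ k, b j k ≠ 0 := by
    intro j
    by_contra hno
    push_neg at hno
    have h5 : ∀ x : Fin n → ℝ, g x j = 0 := by
      intro x
      rw [hgx x j, Finset.sum_eq_zero]
      intro k _
      rw [hno k, zero_mul]
    have h6 := h5 (g.symm (Pi.single j 1))
    rw [LinearEquiv.apply_symm_apply] at h6
    simp at h6
  set π₀ : Fin n → Fin n := fun j => Classical.choose (hrowne j) with hπ₀
  have hπ₀ne : ∀ j, b j (π₀ j) ≠ 0 := fun j => Classical.choose_spec (hrowne j)
  have huniq : ∀ j k, k ≠ π₀ j → b j k = 0 := by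
    intro j k hk
    have h7 := hrows j k (π₀ j) hk
    rcases mul_eq_zero.mp h7 with h | h
    · exact h
    · exact absurd h (hπ₀ne j)
  have hdiag : ∀ (x : Fin n → ℝ) (j : Fin n), g x j = b j (π₀ j) * x (π₀ j) := by
    intro x j
    rw [hgx x j, Finset.sum_eq_single (π₀ j)]
    · intro k _ hk
      rw [huniq j k hk, zero_mul]
    · intro h; exact absurd (mem_univ _) h
  have hinj : Function.Injective π₀ := by
    intro j₁ j₂ hj
    by_contra hne
    set x : Fin n → ℝ := g.symm (Pi.single j₁ 1) with hx
    have h8 : g x j₁ = 1 := by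
      rw [hx, LinearEquiv.apply_symm_apply]
      simp
    have h9 : g x j₂ = 0 := by
      rw [hx, LinearEquiv.apply_symm_apply]
      rw [Pi.single_apply, if_neg (Ne.symm hne)]
    rw [hdiag x j₁] at h8
    rw [hdiag x j₂, ← hj] at h9
    rcases mul_eq_zero.mp h9 with h | h
    · rw [hj] at h
      exact hπ₀ne j₂ h
    · rw [h, mul_zero] at h8
      exact one_ne_zero h8.symm
  refine ⟨Equiv.ofBijective π₀ (Finite.injective_iff_bijective.mp hinj), fun i => b i (π₀ i),
    fun i => hπ₀ne i, ?_⟩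
  intro x i
  rw [hdiag x i]
  rfl
end

section
/- Let 𝔥 be a real Lie subalgebra of sl(2,ℂ), the complex trace-zero 2×2 matrices regarded as a 6-dimensional real Lie algebra, with dim_ℝ 𝔥 ≥ 2. Then there exists a solvable real Lie subalgebra 𝔯 of sl(2,ℂ) with 𝔥 + 𝔯 = sl(2,ℂ). -/
/-! Pick `X, Y ∈ 𝔥` linearly independent over `ℝ`. For `c ∈ ℂ`, the Borel subalgebra `𝔟_c`
stabilising the line through `v = (1, c)` is solvable: brackets of its elements kill `v`, and the
traceless matrices killing `v` form a complex line, hence commute. It is the kernel of the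
`ℂ`-valued form `ℓ_c Z = det (v, Z v)`, so `𝔥 + 𝔟_c = sl(2,ℂ)` as soon as `ℓ_c X` and `ℓ_c Y` are
`ℝ`-independent. If they were dependent for every `c`, the holomorphic function
`c ↦ ℓ_c Y / ℓ_c X` would be real-valued near a point where `ℓ_c X ≠ 0`, hence locally constant by
the open mapping theorem, and the identity theorem would make `Y` a real multiple of `X`. -/

/-- A complex Lie algebra is also a real Lie algebra by restriction of scalars. -/
noncomputable instance lieAlgebraComplexToReal (L : Type*) [LieRing L] [LieAlgebra ℂ L] :
    LieAlgebra ℝ L where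
  lie_smul r x y := lie_smul (r : ℂ) x y

open Filter Topology Complex Matrix LieAlgebra.SpecialLinear

theorem LieAlgebra.isSolvable_of_lie_mem_of_lie_eq_zero {R L : Type*} [CommRing R] [LieRing L]
    [LieAlgebra R L] (I : LieIdeal R L) (hL : ∀ x y : L, ⁅x, y⁆ ∈ I)
    (hI : ∀ x ∈ I, ∀ y ∈ I, ⁅x, y⁆ = 0) : LieAlgebra.IsSolvable L := by
  have h1 : LieAlgebra.derivedSeries R L 1 ≤ I :=
    (LieSubmodule.lie_le_iff _ _ _).mpr fun x _ y _ => hL x y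
  refine LieAlgebra.IsSolvable.mk (R := R) (k := 2) (le_bot_iff.mp ?_)
  calc LieAlgebra.derivedSeries R L 2
        = ⁅LieAlgebra.derivedSeries R L 1, LieAlgebra.derivedSeries R L 1⁆ := rfl
    _ ≤ ⁅I, I⁆ := LieSubmodule.mono_lie h1 h1
    _ = ⊥ := (LieSubmodule.lie_eq_bot_iff _ _).mpr hI

theorem Matrix.lie_mulVec_eq_zero_of_mulVec_eq_smul {n R : Type*} [Fintype n] [DecidableEq n]
    [CommRing R] {A B : Matrix n n R} {v : n → R} {a b : R} (hA : A *ᵥ v = a • v)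
    (hB : B *ᵥ v = b • v) : ⁅A, B⁆ *ᵥ v = 0 := by
  rw [Ring.lie_def, sub_mulVec, ← mulVec_mulVec, ← mulVec_mulVec, hA, hB, mulVec_smul,
    mulVec_smul, hA, hB, smul_smul, smul_smul, mul_comm, sub_self]

theorem LieAlgebra.SpecialLinear.eq_smul_of_mulVec_eq_zero {R : Type*} [CommRing R]
    {A : Matrix (Fin 2) (Fin 2) R} (hA : A ∈ sl (Fin 2) R) {c : R} (h : A *ᵥ ![1, c] = 0) :
    A = A 0 1 • !![-c, 1; -c ^ 2, c] := by
  have htr : A.trace = 0 := hA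
  rw [trace_fin_two] at htr
  have h0 : A 0 0 + A 0 1 * c = 0 := by simpa [mulVec_fin_two] using congrFun h 0
  have h1 : A 1 0 + A 1 1 * c = 0 := by simpa [mulVec_fin_two] using congrFun h 1
  ext i j
  fin_cases i <;> fin_cases j <;>
    simp only [Fin.zero_eta, Fin.mk_one, Fin.isValue, Matrix.smul_apply, of_apply, cons_val',
      cons_val_zero, cons_val_one, cons_val_fin_one, smul_eq_mul, mul_neg, mul_one]
  · linear_combination h0
  · linear_combination h1 + c * h0 - c * htr
  · linear_combination htr - h0

theorem LieAlgebra.SpecialLinear.lie_eq_zero_of_mulVec_eq_zero {R : Type*} [CommRing R]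
    {A B : Matrix (Fin 2) (Fin 2) R} (hA : A ∈ sl (Fin 2) R) (hB : B ∈ sl (Fin 2) R) {c : R}
    (hAc : A *ᵥ ![1, c] = 0) (hBc : B *ᵥ ![1, c] = 0) : ⁅A, B⁆ = 0 := by
  rw [eq_smul_of_mulVec_eq_zero hA hAc, eq_smul_of_mulVec_eq_zero hB hBc, Ring.lie_def,
    smul_mul_smul_comm, smul_mul_smul_comm, mul_comm (A 0 1), sub_self]

theorem Complex.not_eventually_im_eq_zero (w : ℂ) : ¬ ∀ᶠ z in 𝓝 w, z.im = 0 := by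
  intro h
  have hw : w ∈ interior {z : ℂ | z.im ≤ 0} :=
    mem_interior_iff_mem_nhds.mpr (h.mono fun z hz => hz.le)
  rw [interior_setOfPred_im_le] at hw
  exact hw.ne h.self_of_nhds

theorem AnalyticAt.eventually_eq_of_eventually_im_eq_zero {f : ℂ → ℂ} {z₀ : ℂ}
    (hf : AnalyticAt ℂ f z₀) (h : ∀ᶠ z in 𝓝 z₀, (f z).im = 0) : ∀ᶠ z in 𝓝 z₀, f z = f z₀ :=
  hf.eventually_constant_or_nhds_le_map_nhds.resolve_right fun hopen =>
    not_eventually_im_eq_zero _ (hopen h)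

theorem Complex.im_div_eq_zero_of_not_linearIndependent {a b : ℂ} (ha : a ≠ 0)
    (h : ¬ LinearIndependent ℝ ![a, b]) : (b / a).im = 0 := by
  rw [LinearIndependent.pair_iff' ha] at h
  push Not at h
  obtain ⟨r, rfl⟩ := h
  simp [Complex.real_smul, ha]

theorem Submodule.exists_linearIndependent_pair_of_two_le_finrank {K M : Type*} [DivisionRing K]
    [AddCommGroup M] [Module K M] (p : Submodule K M) (h : 2 ≤ Module.finrank K p) :
    ∃ x ∈ p, ∃ y ∈ p, LinearIndependent K ![x, y] := by
  obtain ⟨b, hb⟩ := exists_linearIndependent_of_le_finrank h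
  refine ⟨b 0, (b 0).2, b 1, (b 1).2, ?_⟩
  have hmap := hb.map' p.subtype p.ker_subtype
  rwa [show ⇑p.subtype ∘ b = ![(b 0 : M), b 1] by ext i; fin_cases i <;> rfl] at hmap

theorem Submodule.sup_ker_eq_top_of_linearIndependent_pair {K M V : Type*} [Field K]
    [AddCommGroup M] [Module K M] [AddCommGroup V] [Module K V] (hV : Module.finrank K V = 2)
    {p : Submodule K M} {f : M →ₗ[K] V} {x y : M} (hx : x ∈ p) (hy : y ∈ p)
    (hli : LinearIndependent K ![f x, f y]) : p ⊔ LinearMap.ker f = ⊤ := by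
  rw [← Submodule.comap_map_eq, eq_top_iff, ← Submodule.comap_top f,
    ← hli.span_eq_top_of_card_eq_finrank (by simp [hV])]
  refine Submodule.comap_mono (Submodule.span_le.mpr (Set.range_subset_iff.mpr ?_))
  intro i
  fin_cases i
  exacts [Submodule.mem_map_of_mem hx, Submodule.mem_map_of_mem hy]

local notation "sl₂ℂ" => {A : Matrix (Fin 2) (Fin 2) ℂ // A ∈ sl (Fin 2) ℂ}

namespace SL2Borel

/-- `ell c Z = det (v, Z v)` for `v = (1, c)`: it vanishes iff `Z` preserves the line `ℂ v`. -/
noncomputable def ell (c : ℂ) : sl₂ℂ →ₗ[ℝ] ℂ where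
  toFun Z := (Z.val *ᵥ ![1, c]) 1 - c * (Z.val *ᵥ ![1, c]) 0
  map_add' Z W := by
    simp only [AddMemClass.coe_add, add_mulVec, Pi.add_apply]
    ring
  map_smul' r Z := by
    change (((r : ℂ) • Z.val) *ᵥ ![1, c]) 1 - c * (((r : ℂ) • Z.val) *ᵥ ![1, c]) 0 = _
    simp only [smul_mulVec, Pi.smul_apply, smul_eq_mul, RingHom.id_apply, real_smul]
    ring

theorem ell_apply (c : ℂ) (Z : sl₂ℂ) :
    ell c Z = Z.val 1 0 + c * (Z.val 1 1 - Z.val 0 0) - c ^ 2 * Z.val 0 1 := by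
  simp only [ell, LinearMap.coe_mk, AddHom.coe_mk, mulVec_fin_two, cons_val_zero, cons_val_one,
    cons_val_fin_one, mul_one]
  ring

theorem ell_eq_zero_iff {c : ℂ} {Z : sl₂ℂ} :
    ell c Z = 0 ↔ Z.val *ᵥ ![1, c] = (Z.val *ᵥ ![1, c]) 0 • ![1, c] := by
  simp only [ell, LinearMap.coe_mk, AddHom.coe_mk, mulVec_fin_two, funext_iff, Fin.forall_fin_two,
    Pi.smul_apply, smul_eq_mul, cons_val_zero, cons_val_one, cons_val_fin_one, mul_one, true_and]
  constructor <;> intro h <;> linear_combination h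

noncomputable def borel (c : ℂ) : LieSubalgebra ℝ sl₂ℂ :=
  { LinearMap.ker (ell c) with
    lie_mem' := fun {X Y} (hX : ell c X = 0) (hY : ell c Y = 0) => by
      change ell c ⁅X, Y⁆ = 0
      rw [ell_eq_zero_iff] at hX hY ⊢
      rw [sl_bracket, ← Ring.lie_def, lie_mulVec_eq_zero_of_mulVec_eq_smul hX hY]
      simp }

theorem borel_lie_mulVec_eq_zero {c : ℂ} (X Y : borel c) :
    (⁅X, Y⁆ : borel c).val.val *ᵥ ![1, c] = 0 :=
  lie_mulVec_eq_zero_of_mulVec_eq_smul (ell_eq_zero_iff.mp X.2) (ell_eq_zero_iff.mp Y.2)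

noncomputable def nilradical (c : ℂ) : LieIdeal ℝ (borel c) where
  carrier := {Z | Z.val.val *ᵥ ![1, c] = 0}
  add_mem' {X Y} (hX : _ = 0) (hY : _ = 0) := by
    change (X.val.val + Y.val.val) *ᵥ ![1, c] = 0
    rw [add_mulVec, hX, hY, add_zero]
  zero_mem' := by simp
  smul_mem' r X (hX : _ = 0) := by
    change ((r : ℂ) • X.val.val) *ᵥ ![1, c] = 0
    simp [smul_mulVec, hX]
  lie_mem := fun {X _} _ => borel_lie_mulVec_eq_zero X _

theorem isSolvable_borel (c : ℂ) : LieAlgebra.IsSolvable (borel c) :=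
  LieAlgebra.isSolvable_of_lie_mem_of_lie_eq_zero (nilradical c) borel_lie_mulVec_eq_zero
    fun X hX Y hY => Subtype.ext <| Subtype.ext <|
      lie_eq_zero_of_mulVec_eq_zero X.val.2 Y.val.2 hX hY

theorem differentiable_ell (Z : sl₂ℂ) : Differentiable ℂ (fun c => ell c Z) := by
  simp only [ell_apply]
  fun_prop

theorem eq_zero_of_eventually_ell_eq_zero {Z : sl₂ℂ} {z₀ : ℂ}
    (h : ∀ᶠ c in 𝓝 z₀, ell c Z = 0) : Z = 0 := by
  have hall : ∀ c, ell c Z = 0 := fun c =>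
    AnalyticOnNhd.eqOn_zero_of_preconnected_of_eventuallyEq_zero
      (fun z _ => (differentiable_ell Z).analyticAt z) isPreconnected_univ
      (Set.mem_univ z₀) h (Set.mem_univ c)
  have h0 := hall 0
  have h1 := hall 1
  have h2 := hall (-1)
  have htr : Z.val.trace = 0 := Z.2
  simp only [ell_apply] at h0 h1 h2
  rw [trace_fin_two] at htr
  ext i j
  fin_cases i <;> fin_cases j <;>
    simp only [Fin.zero_eta, Fin.mk_one, Fin.isValue, ZeroMemClass.coe_zero, Matrix.zero_apply]
  · linear_combination htr / 2 - (h1 - h2) / 4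
  · linear_combination (2 * h0 - h1 - h2) / 2
  · linear_combination h0
  · linear_combination htr / 2 + (h1 - h2) / 4

theorem exists_ell_ne_zero {Z : sl₂ℂ} (hZ : Z ≠ 0) : ∃ c, ell c Z ≠ 0 := by
  by_contra! h
  exact hZ (eq_zero_of_eventually_ell_eq_zero (z₀ := 0) (Eventually.of_forall h))

theorem exists_linearIndependent_ell {X Y : sl₂ℂ} (h : LinearIndependent ℝ ![X, Y]) :
    ∃ c, LinearIndependent ℝ ![ell c X, ell c Y] := by
  by_contra! hdep
  have hX : X ≠ 0 := h.ne_zero 0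
  obtain ⟨z₀, hz₀⟩ := exists_ell_ne_zero hX
  have hne : ∀ᶠ c in 𝓝 z₀, ell c X ≠ 0 :=
    (differentiable_ell X).continuous.continuousAt.eventually_ne hz₀
  set g := fun c => ell c Y / ell c X
  have hconst : ∀ᶠ c in 𝓝 z₀, g c = g z₀ :=
    (((differentiable_ell Y).analyticAt z₀).div
      ((differentiable_ell X).analyticAt z₀) hz₀).eventually_eq_of_eventually_im_eq_zero
      (hne.mono fun c hc => im_div_eq_zero_of_not_linearIndependent hc (hdep c))
  have hreal : ((g z₀).re : ℂ) = g z₀ := conj_eq_iff_re.mp <| conj_eq_iff_im.mpr <|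
    im_div_eq_zero_of_not_linearIndependent hz₀ (hdep z₀)
  have hY : Y - (g z₀).re • X = 0 := eq_zero_of_eventually_ell_eq_zero <|
    (hconst.and hne).mono fun c ⟨hc, hx⟩ => by
      rw [map_sub, map_smul, real_smul, hreal, ← hc]
      exact sub_eq_zero.mpr (div_mul_cancel₀ _ hx).symm
  exact (LinearIndependent.pair_iff' hX).mp h _ (sub_eq_zero.mp hY).symm

end SL2Borel

open SL2Borel in
/-- Every real Lie subalgebra `𝔥` of `sl(2,ℂ)` (viewed as a 6-dimensional
real Lie algebra) with `dim_ℝ 𝔥 ≥ 2` admits a solvable complementary subalgebra, i.e. a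
solvable real subalgebra `𝔯` with `𝔥 + 𝔯 = sl(2,ℂ)`. -/
theorem sl2C_real_subalgebra_has_solvable_complement
    (𝔥 : LieSubalgebra ℝ ↥(LieAlgebra.SpecialLinear.sl (Fin 2) ℂ))
    (h2 : 2 ≤ Module.finrank ℝ ↥𝔥) :
    ∃ 𝔯 : LieSubalgebra ℝ ↥(LieAlgebra.SpecialLinear.sl (Fin 2) ℂ),
      LieAlgebra.IsSolvable ↥𝔯 ∧ 𝔥.toSubmodule ⊔ 𝔯.toSubmodule = ⊤ := by
  obtain ⟨X, hX, Y, hY, hXY⟩ := 𝔥.toSubmodule.exists_linearIndependent_pair_of_two_le_finrank h2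
  obtain ⟨c, hc⟩ := exists_linearIndependent_ell hXY
  exact ⟨borel c, isSolvable_borel c,
    Submodule.sup_ker_eq_top_of_linearIndependent_pair finrank_real_complex hX hY hc⟩
end

section
/- Let 𝔤 be a finite-dimensional solvable real Lie algebra and 𝔤₀ ⊆ 𝔤 a Lie subalgebra with the minimality property that every Lie subalgebra 𝔤' ⊆ 𝔤 satisfying 𝔤' + 𝔤₀ = 𝔤 equals 𝔤. Then 𝔤₀ is contained in a nilpotent ideal of 𝔤; hence 𝔤₀ is contained in the nilradical of 𝔤. -/
/-!
If some `x ∈ 𝔤₀` lay outside `⁅𝔤, 𝔤⁆`, a hyperplane containing `⁅𝔤, 𝔤⁆` but not `x` would be a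
proper subalgebra supplementing `𝔤₀`; hence `𝔤₀ ⊆ ⁅𝔤, 𝔤⁆`. In characteristic zero the derived
algebra of a solvable Lie algebra is nilpotent: over an algebraic closure, Lie's theorem gives a
nonzero weight space, which `⁅𝔤, 𝔤⁆` annihilates since weights vanish on brackets, so induction
on the dimension shows that `⁅𝔤, 𝔤⁆` acts nilpotently on every finite-dimensional module, and
Engel's theorem applies.
-/

open Module LieAlgebra LieModule
open scoped TensorProduct

namespace LieModule

section WeightSpace

variable {R L M : Type*} [CommRing R] [LieRing L] [LieAlgebra R L]
  [AddCommGroup M] [Module R M] [LieRingModule L M] [LieModule R L M]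

lemma lie_eq_zero_of_mem_derivedSeries_of_mem_weightSpace {χ : L → R} {m : M}
    (hm : m ∈ weightSpace M χ) {y : L} (hy : y ∈ derivedSeries R L 1) : ⁅y, m⁆ = 0 := by
  rw [mem_weightSpace] at hm
  rw [derivedSeries_def, derivedSeriesOfIdeal_succ, derivedSeriesOfIdeal_zero,
    ← LieSubmodule.mem_toSubmodule, LieSubmodule.lieIdeal_oper_eq_linear_span'] at hy
  induction hy using Submodule.span_induction with
  | mem _ h =>
    obtain ⟨a, -, b, -, rfl⟩ := h
    rw [lie_lie, hm, hm, lie_smul, lie_smul, hm, hm, smul_comm, sub_self]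
  | zero => exact zero_lie m
  | add _ _ _ _ h₁ h₂ => rw [add_lie, h₁, h₂, add_zero]
  | smul r _ _ h => rw [smul_lie, h, smul_zero]

end WeightSpace

variable {K L : Type*} [Field K] [CharZero K] [LieRing L] [LieAlgebra K L] [IsSolvable L]

theorem isNilpotent_toEnd_of_mem_derivedSeries_of_isAlgClosed [IsAlgClosed K]
    (M : Type*) [AddCommGroup M] [Module K M] [LieRingModule L M] [LieModule K L M]
    [FiniteDimensional K M] {y : L} (hy : y ∈ derivedSeries K L 1) :
    _root_.IsNilpotent (toEnd K L M y) := by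
  induction hn : finrank K M using Nat.strong_induction_on generalizing M with
  | _ n ih =>
  rcases subsingleton_or_nontrivial M with _ | _
  · exact ⟨1, Subsingleton.elim _ _⟩
  obtain ⟨χ, hχ⟩ := exists_nontrivial_weightSpace_of_isSolvable K L M
  let W : LieSubmodule K L M := weightSpaceOfIsLieTower K M χ
  have hlt : finrank K (M ⧸ W) < n := by
    have hW : 0 < finrank K W.toSubmodule := Module.finrank_pos_iff.mpr hχ
    have := W.toSubmodule.finrank_quotient_add_finrank
    change finrank K (M ⧸ W.toSubmodule) < n
    omega
  obtain ⟨k, hk⟩ := ih _ hlt (M ⧸ W) rfl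
  refine ⟨k + 1, LinearMap.ext fun m => ?_⟩
  have hkW : (toEnd K L M y ^ k) m ∈ W := by
    rw [← LieSubmodule.Quotient.mk_eq_zero']
    have := LinearMap.congr_fun
      (Module.End.commute_pow_left_of_commute (LieSubmodule.Quotient.toEnd_comp_mk' W y) k) m
    simpa [hk] using this.symm
  rw [pow_succ', Module.End.mul_apply]
  exact lie_eq_zero_of_mem_derivedSeries_of_mem_weightSpace hkW hy

theorem isNilpotent_toEnd_of_mem_derivedSeries
    (M : Type*) [AddCommGroup M] [Module K M] [LieRingModule L M] [LieModule K L M]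
    [FiniteDimensional K M] {y : L} (hy : y ∈ derivedSeries K L 1) :
    _root_.IsNilpotent (toEnd K L M y) := by
  let A := AlgebraicClosure K
  have hy' : (1 : A) ⊗ₜ[K] y ∈ derivedSeries A (A ⊗[K] L) 1 := by
    rw [derivedSeries_baseChange]
    exact Submodule.tmul_mem_baseChange_of_mem 1 hy
  have hinj : Function.Injective (End.baseChangeHom K A M) :=
    LinearMap.baseChangeHom_injective K M A
  rw [← IsNilpotent.map_iff hinj]
  change _root_.IsNilpotent ((toEnd K L M y).baseChange A)
  rw [← toEnd_baseChange]
  exact isNilpotent_toEnd_of_mem_derivedSeries_of_isAlgClosed _ hy'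

end LieModule

namespace LieAlgebra

variable {K L : Type*} [Field K] [LieRing L] [LieAlgebra K L]

theorem isNilpotent_derivedSeries_one [CharZero K] [IsSolvable L] [FiniteDimensional K L] :
    LieRing.IsNilpotent (derivedSeries K L 1) := by
  rw [isNilpotent_iff_forall (R := K)]
  rintro ⟨y, hy⟩
  exact LieSubalgebra.isNilpotent_ad_of_isNilpotent_ad (derivedSeries K L 1 : LieSubalgebra K L)
    (x := ⟨y, hy⟩) (LieModule.isNilpotent_toEnd_of_mem_derivedSeries L hy)

end LieAlgebra

namespace LieSubalgebra

variable {K L : Type*} [Field K] [LieRing L] [LieAlgebra K L]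

def ofDerivedSeriesLE (p : Submodule K L) (hp : (derivedSeries K L 1).toSubmodule ≤ p) :
    LieSubalgebra K L where
  toSubmodule := p
  lie_mem' _ _ := hp <| LieSubmodule.lie_mem_lie (LieSubmodule.mem_top _) (LieSubmodule.mem_top _)

theorem toSubmodule_le_derivedSeries_of_forall_sup_eq_top (H₀ : LieSubalgebra K L)
    (hmin : ∀ H : LieSubalgebra K L, H.toSubmodule ⊔ H₀.toSubmodule = ⊤ → H = ⊤) :
    H₀.toSubmodule ≤ (derivedSeries K L 1).toSubmodule := by
  intro x hx
  by_contra hxD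
  obtain ⟨f, hfx, hf⟩ := Submodule.exists_dual_map_eq_bot_of_notMem hxD inferInstance
  let H := ofDerivedSeriesLE (LinearMap.ker f) (LinearMap.le_ker_iff_map.mpr hf)
  have hsup : H.toSubmodule ⊔ H₀.toSubmodule = ⊤ := by
    rw [eq_top_iff, ← f.span_singleton_sup_ker_eq_top hfx, sup_comm]
    exact sup_le_sup_left ((Submodule.span_singleton_le_iff_mem _ _).mpr hx) _
  have hxH : x ∈ H := hmin H hsup ▸ LieSubalgebra.mem_top x
  exact hfx hxH

end LieSubalgebra

/-- Claim 14.2 of Fels–Kaup.  Let `𝔤` be a finite-dimensional solvable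
real Lie algebra and `𝔤₀ ⊆ 𝔤` a subalgebra such that every subalgebra `𝔤'` with
`𝔤' + 𝔤₀ = 𝔤` equals `𝔤`.  Then `𝔤₀` is contained in a nilpotent ideal of `𝔤` (hence in
the nilradical of `𝔤`). -/
theorem isotropy_in_nilradical_of_minimal
    (𝔤 : Type*) [LieRing 𝔤] [LieAlgebra ℝ 𝔤] [FiniteDimensional ℝ 𝔤]
    [LieAlgebra.IsSolvable 𝔤]
    (𝔤₀ : LieSubalgebra ℝ 𝔤)
    (hmin : ∀ 𝔤' : LieSubalgebra ℝ 𝔤,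
      𝔤'.toSubmodule ⊔ 𝔤₀.toSubmodule = ⊤ → 𝔤' = ⊤) :
    ∃ N : LieIdeal ℝ 𝔤, LieRing.IsNilpotent ↥N ∧ ∀ x ∈ 𝔤₀, x ∈ N :=
  ⟨derivedSeries ℝ 𝔤 1, isNilpotent_derivedSeries_one,
    fun _ hx => 𝔤₀.toSubmodule_le_derivedSeries_of_forall_sup_eq_top hmin hx⟩
end

section
/- For s, t ∈ ℝ let T_s, U_t : ℝ³ → ℝ³ be the affine bijections T_s(x₁, x₂, x₃) = (e^s x₁, e^{2s} x₂, e^{3s} x₃) and U_t(x₁, x₂, x₃) = (x₁ + t, x₂ + 2t x₁ + t², x₃ + 3t x₂ + 3t² x₁ + t³), and let Σ be the subgroup of the group of affine automorphisms of ℝ³ generated by {T_s : s ∈ ℝ} ∪ {U_t : t ∈ ℝ}. Then the orbit of the point (1, 0, 0) under Σ equals the set {(t, t², t³) + r·(1, 2t, 3t²) : t ∈ ℝ, r > 0}. -/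
/-!
Writing `c(t) = (t, t², t³)`, one checks `T_s (c(t) + r c'(t)) = c(eˢt) + eˢr c'(eˢt)` and
`U_u (c(t) + r c'(t)) = c(t + u) + r c'(t + u)`: both families reparametrize the twisted cubic
and rescale its tangent vectors by positive factors. Hence every generator maps the surface of
open tangent half-lines onto itself, which then contains the orbit of `(1, 0, 0) = c(0) + c'(0)`;
conversely `U_t ∘ T_{log r}` sends `(1, 0, 0)` to `c(t) + r c'(t)`.
-/

open Real Pointwise

namespace AffineEquiv

variable {k V P : Type*} [Ring k] [AddCommGroup V] [Module k V] [AddTorsor V P]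

instance applyMulAction : MulAction (P ≃ᵃ[k] P) P where
  smul e p := e p
  one_smul _ := rfl
  mul_smul _ _ _ := rfl

theorem smul_def (e : P ≃ᵃ[k] P) (p : P) : e • p = e p :=
  rfl

end AffineEquiv

namespace TwistedCubic

/-- `c(t) + r c'(t)` for the twisted cubic `c(t) = (t, t², t³)`. -/
def tangentPoint (t r : ℝ) : Fin 3 → ℝ :=
  ![t + r * 1, t ^ 2 + r * (2 * t), t ^ 3 + r * (3 * t ^ 2)]

def tangentHalflines : Set (Fin 3 → ℝ) :=
  {y | ∃ t r : ℝ, 0 < r ∧ y = tangentPoint t r}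

noncomputable def scaling (s : ℝ) (x : Fin 3 → ℝ) : Fin 3 → ℝ :=
  ![exp s * x 0, exp (2 * s) * x 1, exp (3 * s) * x 2]

def shift (u : ℝ) (x : Fin 3 → ℝ) : Fin 3 → ℝ :=
  ![x 0 + u, x 1 + 2 * u * x 0 + u ^ 2, x 2 + 3 * u * x 1 + 3 * u ^ 2 * x 0 + u ^ 3]

theorem tangentPoint_zero_one : tangentPoint 0 1 = ![1, 0, 0] := by
  ext i; fin_cases i <;> simp [tangentPoint]

theorem scaling_tangentPoint (s t r : ℝ) :
    scaling s (tangentPoint t r) = tangentPoint (exp s * t) (exp s * r) := by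
  have h2 : exp (2 * s) = exp s ^ 2 := by rw [← exp_nat_mul]; norm_num
  have h3 : exp (3 * s) = exp s ^ 3 := by rw [← exp_nat_mul]; norm_num
  ext i; fin_cases i <;> simp [scaling, tangentPoint, h2, h3] <;> ring

theorem shift_tangentPoint (u t r : ℝ) :
    shift u (tangentPoint t r) = tangentPoint (t + u) r := by
  ext i; fin_cases i <;> simp [shift, tangentPoint] <;> ring

theorem image_scaling_tangentHalflines (s : ℝ) :
    scaling s '' tangentHalflines = tangentHalflines := by
  ext y
  constructor
  · rintro ⟨_, ⟨t, r, hr, rfl⟩, rfl⟩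
    exact ⟨_, _, by positivity, scaling_tangentPoint s t r⟩
  · rintro ⟨t, r, hr, rfl⟩
    refine ⟨tangentPoint (exp (-s) * t) (exp (-s) * r), ⟨_, _, by positivity, rfl⟩, ?_⟩
    simp only [scaling_tangentPoint, ← mul_assoc, ← exp_add, add_neg_cancel, exp_zero, one_mul]

theorem image_shift_tangentHalflines (u : ℝ) :
    shift u '' tangentHalflines = tangentHalflines := by
  ext y
  constructor
  · rintro ⟨_, ⟨t, r, hr, rfl⟩, rfl⟩
    exact ⟨_, _, hr, shift_tangentPoint u t r⟩
  · rintro ⟨t, r, hr, rfl⟩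
    refine ⟨tangentPoint (t - u) r, ⟨_, _, hr, rfl⟩, ?_⟩
    rw [shift_tangentPoint, sub_add_cancel]

end TwistedCubic

open TwistedCubic

/-- Let `T s` and `U t` be the affine automorphisms of `ℝ³` given by
`T s (x₁,x₂,x₃) = (eˢx₁, e²ˢx₂, e³ˢx₃)` and
`U t (x₁,x₂,x₃) = (x₁+t, x₂+2tx₁+t², x₃+3tx₂+3t²x₁+t³)`, and let `G` be the subgroup of
the group of affine automorphisms of `ℝ³` generated by all `T s` and `U t`.  The orbit of
`(1,0,0)` under `G` is `{c(t) + r·c'(t) : t ∈ ℝ, r > 0}` where `c(t) = (t,t²,t³)` is the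
twisted cubic. -/
theorem orbit_eq_tangent_halflines_of_twisted_cubic
    (T U : ℝ → ((Fin 3 → ℝ) ≃ᵃ[ℝ] (Fin 3 → ℝ)))
    (hT : ∀ (s : ℝ) (x : Fin 3 → ℝ),
      T s x = ![Real.exp s * x 0, Real.exp (2 * s) * x 1, Real.exp (3 * s) * x 2])
    (hU : ∀ (t : ℝ) (x : Fin 3 → ℝ),
      U t x = ![x 0 + t, x 1 + 2 * t * x 0 + t ^ 2,
        x 2 + 3 * t * x 1 + 3 * t ^ 2 * x 0 + t ^ 3])
    (G : Subgroup ((Fin 3 → ℝ) ≃ᵃ[ℝ] (Fin 3 → ℝ)))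
    (hG : G = Subgroup.closure (Set.range T ∪ Set.range U)) :
    {y : Fin 3 → ℝ | ∃ g ∈ G, g ![1, 0, 0] = y} =
      {y : Fin 3 → ℝ | ∃ t r : ℝ, 0 < r ∧
        y = ![t + r * 1, t ^ 2 + r * (2 * t), t ^ 3 + r * (3 * t ^ 2)]} := by
  have hT' (s : ℝ) : ⇑(T s) = scaling s := funext (hT s)
  have hU' (u : ℝ) : ⇑(U u) = shift u := funext (hU u)
  have hG_stab : G ≤ MulAction.stabilizer _ tangentHalflines := by
    rw [hG, Subgroup.closure_le]
    rintro _ (⟨s, rfl⟩ | ⟨u, rfl⟩) <;> rw [SetLike.mem_coe, MulAction.mem_stabilizer_iff]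
    · show ⇑(T s) '' _ = _
      rw [hT', image_scaling_tangentHalflines]
    · show ⇑(U u) '' _ = _
      rw [hU', image_shift_tangentHalflines]
  change _ = tangentHalflines
  ext y
  constructor
  · rintro ⟨g, hg, rfl⟩
    rw [← tangentPoint_zero_one, ← AffineEquiv.smul_def,
      ← MulAction.mem_stabilizer_iff.mp (hG_stab hg)]
    exact Set.smul_mem_smul_set ⟨0, 1, one_pos, rfl⟩
  · rintro ⟨t, r, hr, rfl⟩
    refine ⟨U t * T (log r), hG ▸ mul_mem (Subgroup.subset_closure (.inr ⟨t, rfl⟩))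
      (Subgroup.subset_closure (.inl ⟨log r, rfl⟩)), ?_⟩
    rw [AffineEquiv.coe_mul, Function.comp_apply, hT', hU', ← tangentPoint_zero_one,
      scaling_tangentPoint, shift_tangentPoint, exp_log hr, mul_zero, zero_add, mul_one]
end
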